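/- arXiv:1109.1252 — 7 statements merged into one kernel-verified Lean document; each statement's English description precedes it below -/
import Mathlib

section
/- At each critical point k* of γ (i.e., each point with components in {0, π}), the Hessian of γ is diagonal with entries λ_j cos(k*_j)/γ(k*), and in particular the Hessian is invertible, so every critical point of γ is non-degenerate. -/
/-!
Write `γ = √g` with `g x = ω² + 4 ∑ⱼ λⱼ sin²(xⱼ/2)`. Since `∂ⱼ g = 2 λⱼ sin xⱼ`, the gradient is
`∂ⱼ γ = λⱼ sin xⱼ / γ`. At a critical point every `sin k*ⱼ` vanishes, so in differentiating this
quotient only the numerator contributes: `∂ᵢ ∂ⱼ γ (k*) = δᵢⱼ λⱼ cos k*ⱼ / γ(k*)`. As `cos k*ⱼ = ±1`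
and `γ > 0`, these diagonal entries are nonzero.
-/

open Real

section

variable {E : Type*} [NormedAddCommGroup E] [NormedSpace ℝ E] {c d : E → ℝ} {c' : E →L[ℝ] ℝ}
  {x : E}

theorem HasFDerivAt.div_of_eq_zero (hc : HasFDerivAt c c' x) (hd : DifferentiableAt ℝ d x)
    (hcx : c x = 0) (hdx : d x ≠ 0) :
    HasFDerivAt (fun y => c y / d y) ((d x)⁻¹ • c') x := by
  have hinv := (hasDerivAt_inv hdx).comp_hasFDerivAt x hd.hasFDerivAt
  simpa [div_eq_mul_inv, hcx] using hc.fun_mul hinv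

end

theorem hasDerivAt_sin_div_two_sq (t : ℝ) :
    HasDerivAt (fun s => sin (s / 2) ^ 2) (sin t / 2) t := by
  refine (((hasDerivAt_id t).div_const 2).sin.fun_pow 2).congr_deriv ?_
  rw [show sin t = sin (2 * (t / 2)) by ring_nf, sin_two_mul]
  simp
  ring

section Dispersion

variable {ι : Type*} [Fintype ι] (ω : ℝ) (lam : ι → ℝ)

noncomputable def dispersionSq (x : ι → ℝ) : ℝ := ω ^ 2 + 4 * ∑ j, lam j * sin (x j / 2) ^ 2

noncomputable def dispersion (x : ι → ℝ) : ℝ := √(dispersionSq ω lam x)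

variable {ω lam}

theorem dispersionSq_pos (hω : ω ≠ 0) (hlam : ∀ j, 0 ≤ lam j) (x : ι → ℝ) :
    0 < dispersionSq ω lam x := by
  have : 0 ≤ ∑ j, lam j * sin (x j / 2) ^ 2 :=
    Finset.sum_nonneg fun j _ => mul_nonneg (hlam j) (sq_nonneg _)
  unfold dispersionSq
  positivity

theorem dispersion_pos (hω : ω ≠ 0) (hlam : ∀ j, 0 ≤ lam j) (x : ι → ℝ) :
    0 < dispersion ω lam x :=
  sqrt_pos.2 (dispersionSq_pos hω hlam x)

local notation "dx[" j "]" => (ContinuousLinearMap.proj j : (ι → ℝ) →L[ℝ] ℝ)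

theorem hasFDerivAt_dispersionSq (x : ι → ℝ) :
    HasFDerivAt (dispersionSq ω lam) (∑ j, (2 * lam j * sin (x j)) • dx[j]) x := by
  have hterm j : HasFDerivAt (fun y : ι → ℝ => lam j * sin (y j / 2) ^ 2)
      ((lam j * (sin (x j) / 2)) • dx[j]) x := by
    simpa [smul_smul] using ((hasDerivAt_sin_div_two_sq (x j)).comp_hasFDerivAt x
      (hasFDerivAt_apply (𝕜 := ℝ) j x)).const_mul (lam j)
  refine (((HasFDerivAt.fun_sum fun j _ => hterm j).const_mul 4).const_add (ω ^ 2)).congr_fderiv ?_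
  rw [Finset.smul_sum]
  refine Finset.sum_congr rfl fun j _ => ?_
  rw [smul_smul]
  ring_nf

theorem hasFDerivAt_dispersion (hω : ω ≠ 0) (hlam : ∀ j, 0 ≤ lam j) (x : ι → ℝ) :
    HasFDerivAt (dispersion ω lam) (∑ j, (lam j * sin (x j) / dispersion ω lam x) • dx[j]) x := by
  refine ((hasFDerivAt_dispersionSq x).sqrt (dispersionSq_pos hω hlam x).ne').congr_fderiv ?_
  rw [Finset.smul_sum]
  refine Finset.sum_congr rfl fun j _ => ?_
  rw [smul_smul, dispersion]
  congr 1
  field_simp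

theorem fderiv_dispersion_apply_single (hω : ω ≠ 0) (hlam : ∀ j, 0 ≤ lam j) [DecidableEq ι]
    (j : ι) (x : ι → ℝ) :
    fderiv ℝ (dispersion ω lam) x (Pi.single j 1) = lam j * sin (x j) / dispersion ω lam x := by
  simp [(hasFDerivAt_dispersion hω hlam x).fderiv, Pi.single_apply]

theorem hasFDerivAt_fderiv_dispersion_apply_single (hω : ω ≠ 0) (hlam : ∀ j, 0 ≤ lam j)
    [DecidableEq ι] {k : ι → ℝ} {j : ι} (hk : sin (k j) = 0) :
    HasFDerivAt (fun x => fderiv ℝ (dispersion ω lam) x (Pi.single j 1))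
      ((lam j * cos (k j) / dispersion ω lam k) • dx[j]) k := by
  simp_rw [fderiv_dispersion_apply_single hω hlam]
  have hnum : HasFDerivAt (fun x : ι → ℝ => lam j * sin (x j)) ((lam j * cos (k j)) • dx[j]) k := by
    simpa [smul_smul] using
      ((hasDerivAt_sin (k j)).comp_hasFDerivAt k (hasFDerivAt_apply (𝕜 := ℝ) j k)).const_mul (lam j)
  refine (hnum.div_of_eq_zero (hasFDerivAt_dispersion hω hlam k).differentiableAt
    (by simp [hk]) (dispersion_pos hω hlam k).ne').congr_fderiv ?_
  rw [smul_smul, inv_mul_eq_div]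

theorem fderiv_fderiv_dispersion_apply_single (hω : ω ≠ 0) (hlam : ∀ j, 0 ≤ lam j)
    [DecidableEq ι] {k : ι → ℝ} (hk : ∀ j, sin (k j) = 0) (i j : ι) :
    fderiv ℝ (fun x => fderiv ℝ (dispersion ω lam) x (Pi.single j 1)) k (Pi.single i 1) =
      if i = j then lam j * cos (k j) / dispersion ω lam k else 0 := by
  rw [(hasFDerivAt_fderiv_dispersion_apply_single hω hlam (hk j)).fderiv]
  rcases eq_or_ne i j with rfl | hij
  · simp
  · simp [hij, hij.symm]

end Dispersion

/-- At each critical point `k*` of `γ` (components in `{0, π}`), the Hessian of `γ`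
is diagonal with entries `λⱼ cos(k*ⱼ)/γ(k*)`, and it is invertible (nonzero
determinant), i.e. every critical point of `γ` is non-degenerate. -/
theorem gamma_hessian_nondegenerate (d : ℕ) (ω : ℝ) (hω : 0 < ω) (lam : Fin d → ℝ)
    (hlam : ∀ j, 0 < lam j) (γ : (Fin d → ℝ) → ℝ)
    (hγ : ∀ k, γ k = Real.sqrt (ω ^ 2 + 4 * ∑ j, lam j * Real.sin (k j / 2) ^ 2))
    (k : Fin d → ℝ) (hk : ∀ j, k j = 0 ∨ k j = π) :
    (∀ i j, fderiv ℝ (fun x => fderiv ℝ γ x (Pi.single j 1)) k (Pi.single i 1) =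
      if i = j then lam j * Real.cos (k j) / γ k else 0) ∧
    (Matrix.of fun i j : Fin d =>
      fderiv ℝ (fun x => fderiv ℝ γ x (Pi.single j 1)) k (Pi.single i 1)).det ≠ 0 := by
  obtain rfl : γ = dispersion ω lam := funext hγ
  have hlam' j : 0 ≤ lam j := (hlam j).le
  have hsin j : sin (k j) = 0 := by rcases hk j with h | h <;> simp [h]
  have hcos j : cos (k j) ≠ 0 := by rcases hk j with h | h <;> simp [h]
  have hentries := fderiv_fderiv_dispersion_apply_single hω.ne' hlam' hsin
  refine ⟨hentries, ?_⟩
  have hdiag : (Matrix.of fun i j : Fin d =>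
      fderiv ℝ (fun x => fderiv ℝ (dispersion ω lam) x (Pi.single j 1)) k (Pi.single i 1)) =
      Matrix.diagonal fun j => lam j * cos (k j) / dispersion ω lam k := by
    ext i j
    rw [Matrix.of_apply, hentries, Matrix.diagonal_apply]
    split_ifs with hij
    · rw [hij]
    · rfl
  rw [hdiag, Matrix.det_diagonal, Finset.prod_ne_zero_iff]
  exact fun j _ => div_ne_zero (mul_ne_zero (hlam j).ne' (hcos j))
    (dispersion_pos hω.ne' hlam' k).ne'
end

section
/- In one dimension, the second and third derivatives of γ(k) = sqrt(ω² + 4λ sin²(k/2)) cannot vanish simultaneously: for every k ∈ ℝ, γ''(k) ≠ 0 or γ'''(k) ≠ 0. -/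
open Real

/-!
Squaring removes the root: `γ² = ω² + 2λ - 2λ cos k`. Differentiating this identity with the
Leibniz rule gives `2γγ' = 2λ sin`, `2γ'² + 2γγ'' = 2λ cos` and `6γ'γ'' + 2γγ''' = -2λ sin`.
If `γ''` and `γ'''` both vanish at `k`, the third identity forces `sin k = 0`, then the first
gives `γ'(k) = 0` because `γ > 0`, and then the second gives `cos k = 0`: impossible.
-/

theorem sum_iteratedDeriv_mul_self_of_eq_sub_mul_cos {g : ℝ → ℝ} {a b : ℝ} {n : ℕ}
    (hg : ContDiff ℝ n g) (hn : 0 < n) (hsq : ∀ x, g x * g x = a - b * cos x) (x : ℝ) :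
    ∑ i ∈ Finset.range (n + 1), (n.choose i : ℝ) * iteratedDeriv i g x * iteratedDeriv (n - i) g x =
      -(b * iteratedDeriv n cos x) := by
  rw [← iteratedDeriv_fun_mul hg.contDiffAt hg.contDiffAt, funext hsq,
    iteratedDeriv_const_sub hn, iteratedDeriv_neg, iteratedDeriv_const_mul_field]

theorem iteratedDeriv_two_ne_zero_or_three_ne_zero_of_mul_self_eq_sub_mul_cos
    {g : ℝ → ℝ} {a b : ℝ} (hg : ContDiff ℝ 3 g) (hsq : ∀ x, g x * g x = a - b * cos x)
    (hb : b ≠ 0) {x : ℝ} (hx : g x ≠ 0) :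
    iteratedDeriv 2 g x ≠ 0 ∨ iteratedDeriv 3 g x ≠ 0 := by
  by_contra! ⟨h2, h3⟩
  have hleibniz (n : ℕ) (hn : 0 < n) (hn3 : n ≤ 3) :=
    sum_iteratedDeriv_mul_self_of_eq_sub_mul_cos (hg.of_le (by exact_mod_cast hn3)) hn hsq x
  have hsin : sin x = 0 := by
    simpa [Finset.sum_range_succ, h2, h3, hb] using hleibniz 3 (by norm_num) le_rfl
  have hderiv : deriv g x = 0 := by
    have h1 : g x * deriv g x + deriv g x * g x = b * sin x := by
      simpa [Finset.sum_range_succ] using hleibniz 1 (by norm_num) (by norm_num)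
    rw [hsin, mul_zero] at h1
    have : g x * deriv g x = 0 := by linarith [mul_comm (g x) (deriv g x)]
    exact (mul_eq_zero.1 this).resolve_left hx
  have hcos : cos x = 0 := by
    simpa [Finset.sum_range_succ, h2, hderiv, hb] using hleibniz 2 (by norm_num) (by norm_num)
  simpa [hsin, hcos] using sin_sq_add_cos_sq x

theorem add_four_mul_sin_half_sq (c l x : ℝ) :
    c + 4 * l * sin (x / 2) ^ 2 = c + 2 * l - 2 * l * cos x := by
  rw [sin_sq_eq_half_sub, mul_div_cancel₀ x two_ne_zero]
  ring

/-- In one dimension the second and third derivatives of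
`γ(k) = sqrt(ω² + 4λ sin²(k/2))` cannot vanish simultaneously. -/
theorem gamma_one_dim_derivs (ω lam : ℝ) (hω : 0 < ω) (hlam : 0 < lam)
    (γ : ℝ → ℝ)
    (hγ : ∀ k, γ k = Real.sqrt (ω ^ 2 + 4 * lam * Real.sin (k / 2) ^ 2)) :
    ∀ k : ℝ, iteratedDeriv 2 γ k ≠ 0 ∨ iteratedDeriv 3 γ k ≠ 0 := by
  have hrad (k : ℝ) : 0 < ω ^ 2 + 4 * lam * sin (k / 2) ^ 2 := by positivity
  have hsmooth : ContDiff ℝ 3 γ := by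
    rw [funext hγ]
    exact ContDiff.sqrt (by fun_prop) fun k => (hrad k).ne'
  have hsq (k : ℝ) : γ k * γ k = ω ^ 2 + 2 * lam - 2 * lam * cos k := by
    rw [hγ, mul_self_sqrt (hrad k).le, add_four_mul_sin_half_sq]
  intro k
  refine iteratedDeriv_two_ne_zero_or_three_ne_zero_of_mul_self_eq_sub_mul_cos hsmooth hsq
    (by positivity) ?_
  rw [hγ]
  exact (sqrt_pos.2 (hrad k)).ne'
end

section
/- Each T_t = (U+V) F^{-1} M_t F (U*−V*) is symplectic: Im⟨T_t f, T_t g⟩ = Im⟨f, g⟩ for all f, g ∈ ℓ²(ℤ^d). -/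
/-!
`Im⟪·,·⟫` is the symplectic form, so the claim is that `T_t` is a composite of symplectic maps.
`F`, `F⁻¹` and `M_t` preserve the whole inner product.  For `U + V`, moving `U`, `V` to the
other side with their adjoints (antisymmetry of `Im⟪·,·⟫` accounts for the anti-linear `V`)
gives `Im⟪(U+V)x, (U+V)y⟫ = Im⟪(U*U − V*V)x, y⟫ + Im⟪(U*V − V*U)x, y⟫ = Im⟪x, y⟫`.
The same computation applies to `U* − V*`, since `(U*, −V*)` is again a Bogoliubov pair, with
adjoints `(U, −V)` and the other two of the four relations.
-/

open scoped ComplexInnerProductSpace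

section Symplectic

variable {E E' E'' : Type*}
  [NormedAddCommGroup E] [InnerProductSpace ℂ E]
  [NormedAddCommGroup E'] [InnerProductSpace ℂ E']
  [NormedAddCommGroup E''] [InnerProductSpace ℂ E'']

theorem im_inner_swap (x y : E) : (⟪x, y⟫).im = -(⟪y, x⟫).im := by
  rw [← inner_conj_symm, Complex.conj_im]

def IsSymplectic (A : E → E') : Prop :=
  ∀ x y, (⟪A x, A y⟫).im = (⟪x, y⟫).im

theorem IsSymplectic.comp {B : E' → E''} {A : E → E'} (hB : IsSymplectic B)
    (hA : IsSymplectic A) : IsSymplectic (B ∘ A) :=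
  fun x y => (hB (A x) (A y)).trans (hA x y)

theorem isSymplectic_of_inner_map_map {A : E → E'} (hA : ∀ x y, ⟪A x, A y⟫ = ⟪x, y⟫) :
    IsSymplectic A :=
  fun x y => by rw [hA]

theorem LinearIsometryEquiv.isSymplectic (F : E ≃ₗᵢ[ℂ] E') : IsSymplectic F :=
  isSymplectic_of_inner_map_map F.inner_map_map

theorem isSymplectic_add_of_bogoliubov {U V : E →ₗ[ℝ] E'} {Ustar Vstar : E' →ₗ[ℝ] E}
    (hUstar : ∀ x y, ⟪Ustar x, y⟫ = ⟪x, U y⟫)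
    (hVstar : ∀ x y, ⟪Vstar x, y⟫ = ⟪V y, x⟫)
    (hUU : ∀ x, Ustar (U x) - Vstar (V x) = x)
    (hVU : ∀ x, Vstar (U x) - Ustar (V x) = 0) :
    IsSymplectic (U + V) := by
  intro x y
  have hUV : Ustar (V x) - Vstar (U x) = 0 := by rw [← neg_sub, hVU, neg_zero]
  calc (⟪(U + V) x, (U + V) y⟫).im
      = (⟪U x, U y⟫).im - (⟪V y, U x⟫).im + (⟪V x, U y⟫).im - (⟪V y, V x⟫).im := by
        simp only [LinearMap.add_apply, inner_add_left, inner_add_right, Complex.add_im,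
          im_inner_swap (U x) (V y), im_inner_swap (V x) (V y)]
        ring
    _ = (⟪Ustar (U x) - Vstar (V x), y⟫).im + (⟪Ustar (V x) - Vstar (U x), y⟫).im := by
        simp only [inner_sub_left, Complex.sub_im, hUstar, hVstar]
        ring
    _ = (⟪x, y⟫).im := by rw [hUU, hUV, inner_zero_left, Complex.zero_im, add_zero]

theorem isSymplectic_sub_of_bogoliubov {U V : E →ₗ[ℝ] E'} {Ustar Vstar : E' →ₗ[ℝ] E}
    (hUstar : ∀ x y, ⟪Ustar x, y⟫ = ⟪x, U y⟫)
    (hVstar : ∀ x y, ⟪Vstar x, y⟫ = ⟪V y, x⟫)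
    (hUU : ∀ x, U (Ustar x) - V (Vstar x) = x)
    (hVU : ∀ x, V (Ustar x) - U (Vstar x) = 0) :
    IsSymplectic (Ustar - Vstar) := by
  rw [sub_eq_add_neg]
  refine isSymplectic_add_of_bogoliubov (Ustar := U) (Vstar := -V) ?_ ?_ ?_ ?_
  · intro x y
    rw [← inner_conj_symm, ← hUstar, inner_conj_symm]
  · intro x y
    simp only [LinearMap.neg_apply, inner_neg_left, hVstar]
  · intro x
    simpa only [LinearMap.neg_apply, map_neg, neg_neg] using hUU x
  · intro x
    simp only [LinearMap.neg_apply, map_neg, sub_neg_eq_add, neg_add_eq_sub]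
    rw [← neg_sub, hVU, neg_zero]

end Symplectic

theorem harmonic_T_symplectic_general {H K : Type*}
    [NormedAddCommGroup H] [InnerProductSpace ℂ H]
    [NormedAddCommGroup K] [InnerProductSpace ℂ K]
    (F : H ≃ₗᵢ[ℂ] K)
    (U V Ustar Vstar : H →ₗ[ℝ] H)
    (hUstar : ∀ x y, ⟪Ustar x, y⟫ = ⟪x, U y⟫)
    (hVstar : ∀ x y, ⟪Vstar x, y⟫ = ⟪V y, x⟫)
    (hrel1 : ∀ x, Ustar (U x) - Vstar (V x) = x)
    (hrel2 : ∀ x, U (Ustar x) - V (Vstar x) = x)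
    (hrel3 : ∀ x, Vstar (U x) - Ustar (V x) = 0)
    (hrel4 : ∀ x, V (Ustar x) - U (Vstar x) = 0)
    (Mt : ℝ → K →ₗ[ℂ] K)
    (hMunitary : ∀ t x y, ⟪Mt t x, Mt t y⟫ = ⟪x, y⟫)
    (T : ℝ → H → H)
    (hT : ∀ t f, T t f = (U + V) (F.symm (Mt t (F ((Ustar - Vstar) f))))) :
    ∀ (t : ℝ) (f g : H), (⟪T t f, T t g⟫).im = (⟪f, g⟫).im := by
  intro t
  have hTt : T t = (U + V) ∘ F.symm ∘ Mt t ∘ F ∘ (Ustar - Vstar) := funext (hT t)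
  rw [hTt]
  exact (isSymplectic_add_of_bogoliubov hUstar hVstar hrel1 hrel3).comp <|
    F.symm.isSymplectic.comp <| (isSymplectic_of_inner_map_map (hMunitary t)).comp <|
    F.isSymplectic.comp (isSymplectic_sub_of_bogoliubov hUstar hVstar hrel2 hrel4)

/-- Each `T_t = (U+V) F⁻¹ M_t F (U*−V*)` is symplectic:
`Im⟪T_t f, T_t g⟫ = Im⟪f, g⟫` for all `f, g`.  Here `U`, `V` are the Bogoliubov
transformations (with `U` complex linear and `V` anti-linear) satisfying
`U*U − V*V = 1 = UU* − VV*`, `V*U − U*V = 0 = VU* − UV*`, `U*` and `V*` are the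
adjoints of `U` and of the anti-linear map `V`, and `M_t`, multiplication by
`e^{2iγt}`, is unitary. -/
theorem harmonic_T_symplectic {H K : Type*}
    [NormedAddCommGroup H] [InnerProductSpace ℂ H]
    [NormedAddCommGroup K] [InnerProductSpace ℂ K]
    (F : H ≃ₗᵢ[ℂ] K)
    (U V Ustar Vstar : H →ₗ[ℝ] H)
    (hUc : ∀ (c : ℂ) x, U (c • x) = c • U x)
    (hVc : ∀ (c : ℂ) x, V (c • x) = (starRingEnd ℂ c) • V x)
    (hUstar : ∀ x y, ⟪Ustar x, y⟫ = ⟪x, U y⟫)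
    (hVstar : ∀ x y, ⟪Vstar x, y⟫ = ⟪V y, x⟫)
    (hrel1 : ∀ x, Ustar (U x) - Vstar (V x) = x)
    (hrel2 : ∀ x, U (Ustar x) - V (Vstar x) = x)
    (hrel3 : ∀ x, Vstar (U x) - Ustar (V x) = 0)
    (hrel4 : ∀ x, V (Ustar x) - U (Vstar x) = 0)
    (Mt : ℝ → K →ₗ[ℂ] K)
    (hMunitary : ∀ t x y, ⟪Mt t x, Mt t y⟫ = ⟪x, y⟫)
    (T : ℝ → H → H)
    (hT : ∀ t f, T t f = (U + V) (F.symm (Mt t (F ((Ustar - Vstar) f))))) :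
    ∀ (t : ℝ) (f g : H), (⟪T t f, T t g⟫).im = (⟪f, g⟫).im :=
  harmonic_T_symplectic_general F U V Ustar Vstar hUstar hVstar hrel1 hrel2 hrel3 hrel4 Mt hMunitary
    T hT
end

section
/- Let φ : ℝ^d → ℝ be smooth and η : ℝ^d → ℂ smooth with compact support, and suppose for some 1 ≤ j ≤ d and α > 0 that |∂φ/∂y_j(y)| ≥ α on supp(η). Then for every integer N ≥ 1 there is a constant C_N (depending on φ, η, α, d but not on t) such that |∫_{ℝ^d} e^{itφ(y)} η(y) dy| ≤ C_N / |t|^N for all real t ≠ 0. -/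
open MeasureTheory
open scoped Manifold

/-- Non-stationary phase: if `|∂φ/∂y_j| ≥ α > 0` on the support of the smooth,
compactly supported amplitude `η`, then for each integer `N ≥ 1` the oscillatory
integral `∫ e^{itφ} η` is `O(|t|^{-N})`, with a constant independent of `t`. -/
theorem nonstationary_phase (d : ℕ) (φ : (Fin d → ℝ) → ℝ) (hφ : ContDiff ℝ (⊤ : ℕ∞) φ)
    (η : (Fin d → ℝ) → ℂ) (hη : ContDiff ℝ (⊤ : ℕ∞) η) (hsupp : HasCompactSupport η)
    (j : Fin d) (α : ℝ) (hα : 0 < α)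
    (hlow : ∀ y ∈ tsupport η, α ≤ |fderiv ℝ φ y (Pi.single j 1)|) :
    ∀ N : ℕ, 1 ≤ N → ∃ C : ℝ, ∀ t : ℝ, t ≠ 0 →
      ‖∫ y : Fin d → ℝ, Complex.exp (Complex.I * (t : ℂ) * ((φ y : ℝ) : ℂ)) * η y‖ ≤
        C / |t| ^ N := by
  intro N hN
  set v : Fin d → ℝ := Pi.single j 1 with hv
  set g : (Fin d → ℝ) → ℝ := fun y => fderiv ℝ φ y v with hgdef
  have hgsmooth : ContDiff ℝ (⊤ : ℕ∞) g := by
    exact (hφ.fderiv_right (by simp)).clm_apply contDiff_const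
  have hgcont : Continuous g := hgsmooth.continuous
  -- the open set where `g ≠ 0`
  have hsub : tsupport η ⊆ {y | g y ≠ 0} := by
    intro y hy
    have h1 := hlow y hy
    simp only [Set.mem_setOf_eq]
    intro h0
    rw [hgdef] at h0
    simp only [h0, abs_zero] at h1
    linarith
  -- smooth cutoff χ : 1 on tsupport η, vanishing on a nbhd of {g = 0}
  obtain ⟨χ₀, hχ0, hχ1, -⟩ :=
    exists_contMDiffMap_zero_one_nhds_of_isClosed (𝓘(ℝ, Fin d → ℝ)) (n := (⊤ : ℕ∞))
      (s := {y : Fin d → ℝ | g y ≠ 0}ᶜ) (t := tsupport η)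
      (isOpen_ne_fun hgcont continuous_const).isClosed_compl (isClosed_tsupport η)
      (by rw [Set.disjoint_compl_left_iff_subset]; exact hsub)
  set χ : (Fin d → ℝ) → ℝ := (χ₀ : (Fin d → ℝ) → ℝ) with hχdef
  have hχsmooth : ContDiff ℝ (⊤ : ℕ∞) χ := contMDiff_iff_contDiff.mp χ₀.contMDiff
  obtain ⟨W, hWopen, hWsub, hWzero⟩ := eventually_nhdsSet_iff_exists.mp hχ0
  obtain ⟨V, hVopen, hVsub, hVone⟩ := eventually_nhdsSet_iff_exists.mp hχ1
  have hχone : ∀ y ∈ tsupport η, χ y = 1 := fun y hy => hVone y (hVsub hy)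
  -- h = χ / g is smooth
  set h : (Fin d → ℝ) → ℝ := fun y => χ y / g y with hhdef
  have hχW : ∀ y ∈ W, χ y = 0 := hWzero
  have hhsmooth : ContDiff ℝ (⊤ : ℕ∞) h := by
    rw [contDiff_iff_contDiffAt]
    intro x
    by_cases hx : g x ≠ 0
    · exact (hχsmooth.contDiffAt).div (hgsmooth.contDiffAt) hx
    · push_neg at hx
      have hxW : x ∈ W := hWsub (by simpa using hx)
      have : h =ᶠ[nhds x] (fun _ => (0:ℝ)) := by
        filter_upwards [hWopen.mem_nhds hxW] with y hy
        simp [hhdef, hχW y hy]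
      exact (contDiffAt_const (c := (0:ℝ))).congr_of_eventuallyEq this
  -- g * h = χ everywhere
  have hgh : ∀ y, g y * h y = χ y := by
    intro y
    by_cases hy : g y = 0
    · have : χ y = 0 := hχW y (hWsub (by simpa using hy))
      simp [hhdef, hy, this]
    · show g y * (χ y / g y) = χ y
      field_simp
  -- the phase function and its derivative
  set F : ℝ → (Fin d → ℝ) → ℂ :=
    fun t y => Complex.exp (Complex.I * (t : ℂ) * ((φ y : ℝ) : ℂ)) with hFdef
  have hφdiff : Differentiable ℝ φ := hφ.differentiable (by simp)
  have hFderiv : ∀ (t : ℝ) (y : Fin d → ℝ),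
      HasFDerivAt (F t)
        ((F t y * (Complex.I * t)) •
          (Complex.ofRealCLM.comp (fderiv ℝ φ y))) y := by
    intro t y
    have h1 : HasFDerivAt (fun z => ((φ z : ℝ) : ℂ))
        (Complex.ofRealCLM.comp (fderiv ℝ φ y)) y :=
      Complex.ofRealCLM.hasFDerivAt.comp y (hφdiff y).hasFDerivAt
    have h2 : HasFDerivAt (fun z => Complex.I * (t : ℂ) * ((φ z : ℝ) : ℂ))
        ((Complex.I * t) • (Complex.ofRealCLM.comp (fderiv ℝ φ y))) y := h1.const_mul _
    have h3 := h2.cexp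
    rw [smul_smul] at h3
    exact h3
  have hFderiv_apply : ∀ (t : ℝ) (y : Fin d → ℝ),
      fderiv ℝ (F t) y v = F t y * (Complex.I * t) * (g y : ℂ) := by
    intro t y
    rw [(hFderiv t y).fderiv]
    simp only [ContinuousLinearMap.smul_apply, ContinuousLinearMap.coe_comp',
      Function.comp_apply, Complex.ofRealCLM_apply, smul_eq_mul, hgdef]
  have hFcont : ∀ t : ℝ, Continuous (F t) := by
    intro t
    exact Complex.continuous_exp.comp (by fun_prop)
  have hFdiff : ∀ t : ℝ, Differentiable ℝ (F t) := fun t y => (hFderiv t y).differentiableAt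
  -- main induction
  have main : ∀ k : ℕ, ∃ ζ : (Fin d → ℝ) → ℂ,
      ContDiff ℝ (⊤ : ℕ∞) ζ ∧ HasCompactSupport ζ ∧ tsupport ζ ⊆ tsupport η ∧
      ∀ t : ℝ, t ≠ 0 →
        (∫ y, F t y * η y) = (-(Complex.I * t)⁻¹) ^ k * ∫ y, F t y * ζ y := by
    intro k
    induction k with
    | zero => exact ⟨η, hη.of_le (by simp), hsupp, le_refl _, fun t _ => by simp⟩
    | succ n ih =>
      obtain ⟨ζ, hζsmooth, hζc, hζsub, hζeq⟩ := ih
      set ψ : (Fin d → ℝ) → ℂ := fun y => (h y : ℂ) * ζ y with hψdef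
      have hψsmooth : ContDiff ℝ (⊤ : ℕ∞) ψ :=
        (Complex.ofRealCLM.contDiff.comp hhsmooth).mul hζsmooth
      have hψc : HasCompactSupport ψ := hζc.mul_left
      have hψsub : tsupport ψ ⊆ tsupport ζ := by
        apply closure_mono
        intro y hy
        simp only [Function.mem_support, hψdef] at hy ⊢
        intro h0
        exact hy (by simp [h0])
      set ζ' : (Fin d → ℝ) → ℂ := fun y => fderiv ℝ ψ y v with hζ'def
      have hζ'smooth : ContDiff ℝ (⊤ : ℕ∞) ζ' :=
        (hψsmooth.fderiv_right (by simp)).clm_apply contDiff_const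
      have hζ'sub : tsupport ζ' ⊆ tsupport ζ := by
        refine subset_trans ?_ hψsub
        refine closure_minimal ?_ isClosed_closure
        intro y hy
        have : fderiv ℝ ψ y ≠ 0 := by
          simp only [Function.mem_support, hζ'def] at hy
          intro h0; exact hy (by simp [h0])
        exact support_fderiv_subset ℝ (Function.mem_support.mpr this)
      have hζ'c : HasCompactSupport ζ' :=
        IsCompact.of_isClosed_subset hζc isClosed_closure hζ'sub
      refine ⟨ζ', hζ'smooth, hζ'c, hζ'sub.trans hζsub, ?_⟩
      intro t ht
      have htc : (Complex.I * t) ≠ 0 := by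
        simp [Complex.ext_iff, ht]
      -- integrability facts
      have hζcont : Continuous ζ := hζsmooth.continuous
      have hψcont : Continuous ψ := hψsmooth.continuous
      have hζ'cont : Continuous ζ' := hζ'smooth.continuous
      have int1 : Integrable (fun y => fderiv ℝ (F t) y v * ψ y) := by
        have : (fun y => fderiv ℝ (F t) y v * ψ y)
            = fun y => (F t y * (Complex.I * t) * (g y : ℂ)) * ψ y := by
          funext y; rw [hFderiv_apply]
        rw [this]
        apply Continuous.integrable_of_hasCompactSupport
        · fun_prop
        · exact hψc.mul_left
      have int2 : Integrable (fun y => F t y * fderiv ℝ ψ y v) := by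
        apply Continuous.integrable_of_hasCompactSupport
        · exact (hFcont t).mul hζ'cont
        · exact hζ'c.mul_left
      have int3 : Integrable (fun y => F t y * ψ y) :=
        Continuous.integrable_of_hasCompactSupport ((hFcont t).mul hψcont) hψc.mul_left
      -- integration by parts
      have ibp := integral_mul_fderiv_eq_neg_fderiv_mul_of_integrable
        int1 int2 int3 (fun x _ => hFdiff t x) (fun x _ => hψsmooth.differentiable (by simp) x)
      -- rewrite the right-hand side
      have key : (∫ y, fderiv ℝ (F t) y v * ψ y)
          = (Complex.I * t) * ∫ y, F t y * ζ y := by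
        rw [← integral_const_mul]
        congr 1
        funext y
        rw [hFderiv_apply]
        have h1 : ((g y : ℂ)) * ((h y : ℂ)) = (χ y : ℂ) := by
          rw [← Complex.ofReal_mul, hgh]
        have h2 : (χ y : ℂ) * ζ y = ζ y := by
          by_cases hy : y ∈ tsupport ζ
          · rw [hχone y (hζsub hy)]; simp
          · have : ζ y = 0 := image_eq_zero_of_notMem_tsupport hy
            simp [this]
        calc F t y * (Complex.I * t) * (g y : ℂ) * ((h y : ℂ) * ζ y)
            = Complex.I * t * (F t y * (((g y : ℂ) * (h y : ℂ)) * ζ y)) := by ring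
          _ = Complex.I * t * (F t y * ζ y) := by rw [h1, h2]
      rw [hζeq t ht, ibp, key]
      rw [pow_succ]
      have htc' : (t:ℂ) ≠ 0 := by exact_mod_cast ht
      field_simp
  -- conclude
  obtain ⟨ζ, hζsmooth, hζc, hζsub, hζeq⟩ := main N
  refine ⟨∫ y, ‖ζ y‖, ?_⟩
  intro t ht
  rw [show (fun y : Fin d → ℝ => Complex.exp (Complex.I * (t:ℂ) * ((φ y : ℝ):ℂ)) * η y)
      = fun y => F t y * η y from rfl]
  rw [hζeq t ht]
  rw [norm_mul, norm_pow]
  have h1 : ‖-(Complex.I * (t:ℂ))⁻¹‖ = |t|⁻¹ := by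
    rw [norm_neg, norm_inv, norm_mul, Complex.norm_I, one_mul, Complex.norm_real,
      Real.norm_eq_abs]
  rw [h1]
  have h2 : ‖∫ y, F t y * ζ y‖ ≤ ∫ y, ‖ζ y‖ := by
    refine le_trans (norm_integral_le_integral_norm _) ?_
    apply integral_mono_of_nonneg
    · filter_upwards with y; positivity
    · exact (hζsmooth.continuous.norm).integrable_of_hasCompactSupport hζc.norm
    · filter_upwards with y
      rw [norm_mul, hFdef]
      simp only
      rw [show Complex.I * (t:ℂ) * ((φ y : ℝ):ℂ) = ((t * φ y : ℝ):ℂ) * Complex.I by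
        push_cast; ring]
      rw [Complex.norm_exp_ofReal_mul_I, one_mul]
  calc (|t|⁻¹) ^ N * ‖∫ y, F t y * ζ y‖ ≤ (|t|⁻¹) ^ N * ∫ y, ‖ζ y‖ := by
        apply mul_le_mul_of_nonneg_left h2; positivity
    _ = (∫ y, ‖ζ y‖) / |t| ^ N := by rw [inv_pow]; ring
end

section
/- (Van der Corput with amplitude) Let φ : ℝ → ℝ be C^k on [a,b] with |φ^{(k)}(x)| ≥ α > 0 for all x ∈ [a,b], where k ≥ 2. Then for every C¹ function η on [a,b], |∫_a^b e^{iφ(x)} η(x) dx| ≤ (c_k / α^{1/k}) ( |η(b)| + ∫_a^b |η'(x)| dx ), where c_k = 5·2^{k−1} − 2. -/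
/-!
Induction on `k`, starting from a first-derivative bound: if `|φ'| ≥ δ` and `φ''` has constant
sign, integrating `e^{iφ} = (e^{iφ})' / (iφ')` by parts gives `3 / δ`, since `1/φ'` is monotone
and bounded by `1/δ`. If `|g'| ≥ α` then `|g(x)| ≥ α |x - c|` for some `c`, so applying this to
`g = φ^{(k-1)}`, the previous case with `αδ` handles the parts of `[a,b]` at distance `≥ δ`
from `c`, and the remaining interval contributes at most `2δ`. Taking `δ = α^{-1/k}` gives
`c_k = 2 c_{k-1} + 2`, `c_1 = 3`. The amplitude is removed by integrating by parts against the
primitive `x ↦ ∫_a^x e^{iφ}`, which the amplitude-free bound controls uniformly in `x`.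
-/
open MeasureTheory intervalIntegral Set
open scoped Interval

theorem IsPreconnected.forall_le_or_forall_le_neg_of_le_abs {s : Set ℝ} {h : ℝ → ℝ} {α : ℝ}
    (hs : IsPreconnected s) (hα : 0 < α) (hh : ContinuousOn h s) (hl : ∀ x ∈ s, α ≤ |h x|) :
    (∀ x ∈ s, α ≤ h x) ∨ ∀ x ∈ s, h x ≤ -α := by
  by_contra! ⟨⟨x, hx, hxα⟩, ⟨y, hy, hyα⟩⟩
  have hx' : h x ≤ -α := by cases abs_cases (h x) <;> linarith [hl x hx]
  have hy' : α ≤ h y := by cases abs_cases (h y) <;> linarith [hl y hy]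
  obtain ⟨z, hz, hz0⟩ := hs.intermediate_value hx hy hh
    (show (0 : ℝ) ∈ Icc (h x) (h y) from ⟨by linarith, by linarith⟩)
  have := hl z hz
  rw [hz0, abs_zero] at this
  linarith

theorem exists_mul_abs_sub_le_abs_of_mul_sub_le {a b α : ℝ} {g : ℝ → ℝ} (hab : a ≤ b)
    (hg : ContinuousOn g (Icc a b))
    (hgrowth : ∀ x ∈ Icc a b, ∀ y ∈ Icc a b, x ≤ y → α * (y - x) ≤ g y - g x) :
    ∃ c, ∀ x ∈ Icc a b, α * |x - c| ≤ |g x| := by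
  have ha : a ∈ Icc a b := left_mem_Icc.2 hab
  have hb : b ∈ Icc a b := right_mem_Icc.2 hab
  by_cases hga : 0 ≤ g a
  · refine ⟨a, fun x hx => ?_⟩
    rw [abs_of_nonneg (sub_nonneg.2 hx.1)]
    linarith [hgrowth a ha x hx hx.1, le_abs_self (g x)]
  by_cases hgb : g b ≤ 0
  · refine ⟨b, fun x hx => ?_⟩
    rw [abs_sub_comm, abs_of_nonneg (sub_nonneg.2 hx.2)]
    linarith [hgrowth x hx b hb hx.2, neg_abs_le (g x)]
  obtain ⟨c, hc, hgc⟩ := intermediate_value_Icc hab hg ⟨(not_le.1 hga).le, (not_le.1 hgb).le⟩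
  refine ⟨c, fun x hx => ?_⟩
  rcases le_total c x with hcx | hxc
  · rw [abs_of_nonneg (sub_nonneg.2 hcx)]
    linarith [hgrowth c hc x hx hcx, le_abs_self (g x)]
  · rw [abs_of_nonpos (sub_nonpos.2 hxc)]
    linarith [hgrowth x hx c hc hxc, neg_abs_le (g x)]

theorem exists_mul_abs_sub_le_abs_of_hasDerivWithinAt {a b α : ℝ} {g h : ℝ → ℝ} (hab : a ≤ b)
    (hα : 0 < α) (hg : ∀ x ∈ Icc a b, HasDerivWithinAt g (h x) (Icc a b) x)
    (hh : ContinuousOn h (Icc a b)) (hl : ∀ x ∈ Icc a b, α ≤ |h x|) :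
    ∃ c, ∀ x ∈ Icc a b, α * |x - c| ≤ |g x| := by
  have of_le_deriv : ∀ {g h : ℝ → ℝ}, (∀ x ∈ Icc a b, HasDerivWithinAt g (h x) (Icc a b) x) →
      (∀ x ∈ Icc a b, α ≤ h x) → ∃ c, ∀ x ∈ Icc a b, α * |x - c| ≤ |g x| := by
    intro g h hg hl
    have hgc : ContinuousOn g (Icc a b) := fun x hx => (hg x hx).continuousWithinAt
    have hderiv : ∀ x ∈ Ioo a b, HasDerivAt g (h x) x := fun x hx =>
      (hg x (Ioo_subset_Icc_self hx)).hasDerivAt (Icc_mem_nhds hx.1 hx.2)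
    refine exists_mul_abs_sub_le_abs_of_mul_sub_le hab hgc
      ((convex_Icc a b).mul_sub_le_image_sub_of_le_deriv hgc ?_ ?_) <;> rw [interior_Icc]
    · exact fun x hx => (hderiv x hx).differentiableAt.differentiableWithinAt
    · exact fun x hx => (hderiv x hx).deriv ▸ hl x (Ioo_subset_Icc_self hx)
  rcases isPreconnected_Icc.forall_le_or_forall_le_neg_of_le_abs hα hh hl with hpos | hneg
  · exact of_le_deriv hg hpos
  · obtain ⟨c, hc⟩ := of_le_deriv (fun x hx => (hg x hx).neg) fun x hx => le_neg.2 (hneg x hx)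
    exact ⟨c, fun x hx => by simpa only [Pi.neg_apply, abs_neg] using hc x hx⟩

theorem norm_integral_le_of_norm_integral_le_away_from {E : Type*} [NormedAddCommGroup E]
    [NormedSpace ℝ E] {f : ℝ → E} {a b c δ M : ℝ} (hab : a ≤ b) (hδ : 0 ≤ δ) (hM : 0 ≤ M)
    (hf : IntervalIntegrable f volume a b) (hf1 : ∀ x ∈ Icc a b, ‖f x‖ ≤ 1)
    (H : ∀ a' b', a ≤ a' → a' ≤ b' → b' ≤ b → (∀ x ∈ Icc a' b', δ ≤ |x - c|) →
      ‖∫ x in a'..b', f x‖ ≤ M) :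
    ‖∫ x in a..b, f x‖ ≤ 2 * M + 2 * δ := by
  set p := max a (min b (c - δ))
  set q := min b (max a (c + δ))
  have hap : a ≤ p := le_max_left _ _
  have hqb : q ≤ b := min_le_left _ _
  have hpq : p ≤ q := by simp only [p, q, min_def, max_def]; split_ifs <;> linarith
  have hqp : q - p ≤ 2 * δ := by simp only [p, q, min_def, max_def]; split_ifs <;> linarith
  have hpb : p ≤ b := hpq.trans hqb
  have haq : a ≤ q := hap.trans hpq
  have hint : ∀ {u v}, a ≤ u → u ≤ b → a ≤ v → v ≤ b → IntervalIntegrable f volume u v :=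
    fun hu hu' hv hv' => hf.mono_set (by
      rw [uIcc_of_le hab]; exact uIcc_subset_Icc ⟨hu, hu'⟩ ⟨hv, hv'⟩)
  have hleft : ‖∫ x in a..p, f x‖ ≤ M := by
    rcases hap.eq_or_lt with hp | hp
    · rw [← hp, integral_same, norm_zero]; exact hM
    · have hpc : p ≤ c - δ := by
        simp only [p, min_def, max_def] at hp ⊢; split_ifs at hp ⊢ <;> linarith
      refine H a p le_rfl hap hpb fun x hx => ?_
      linarith [neg_abs_le (x - c), hx.2]
  have hright : ‖∫ x in q..b, f x‖ ≤ M := by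
    rcases hqb.eq_or_lt with hq | hq
    · rw [hq, integral_same, norm_zero]; exact hM
    · have hqc : c + δ ≤ q := by
        simp only [q, min_def, max_def] at hq ⊢; split_ifs at hq ⊢ <;> linarith
      refine H q b haq hqb le_rfl fun x hx => ?_
      linarith [le_abs_self (x - c), hx.1]
  have hmid : ‖∫ x in p..q, f x‖ ≤ 2 * δ := by
    calc ‖∫ x in p..q, f x‖ ≤ 1 * |q - p| := norm_integral_le_of_norm_le_const fun x hx => by
            rw [uIoc_of_le hpq] at hx
            exact hf1 x ⟨hap.trans hx.1.le, hx.2.trans hqb⟩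
      _ ≤ 2 * δ := by rwa [one_mul, abs_of_nonneg (sub_nonneg.2 hpq)]
  rw [← integral_add_adjacent_intervals (hint le_rfl hab haq hqb) (hint haq hqb hab le_rfl),
    ← integral_add_adjacent_intervals (hint le_rfl hab hap hpb) (hint hap hpb haq hqb)]
  calc _ ≤ ‖∫ x in a..p, f x‖ + ‖∫ x in p..q, f x‖ + ‖∫ x in q..b, f x‖ := norm_add₃_le
    _ ≤ M + 2 * δ + M := by gcongr
    _ = 2 * M + 2 * δ := by ring

theorem norm_integral_le_of_norm_integral_le_on_superlevel {E : Type*} [NormedAddCommGroup E]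
    [NormedSpace ℝ E] {f : ℝ → E} {g h : ℝ → ℝ} {a b α δ M : ℝ} (hab : a ≤ b) (hα : 0 < α)
    (hδ : 0 ≤ δ) (hM : 0 ≤ M) (hf : IntervalIntegrable f volume a b)
    (hf1 : ∀ x ∈ Icc a b, ‖f x‖ ≤ 1) (hg : ∀ x ∈ Icc a b, HasDerivWithinAt g (h x) (Icc a b) x)
    (hh : ContinuousOn h (Icc a b)) (hl : ∀ x ∈ Icc a b, α ≤ |h x|)
    (H : ∀ a' b', a ≤ a' → a' ≤ b' → b' ≤ b → (∀ x ∈ Icc a' b', α * δ ≤ |g x|) →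
      ‖∫ x in a'..b', f x‖ ≤ M) :
    ‖∫ x in a..b, f x‖ ≤ 2 * M + 2 * δ := by
  obtain ⟨c, hc⟩ := exists_mul_abs_sub_le_abs_of_hasDerivWithinAt hab hα hg hh hl
  refine norm_integral_le_of_norm_integral_le_away_from (c := c) hab hδ hM hf hf1
    fun a' b' ha' hab' hb' hfar => H a' b' ha' hab' hb' fun x hx => ?_
  exact (mul_le_mul_of_nonneg_left (hfar x hx) hα.le).trans
    (hc x ⟨ha'.trans hx.1, hx.2.trans hb'⟩)

theorem integral_abs_eq_abs_sub_of_hasDerivWithinAt {a b : ℝ} {f f' : ℝ → ℝ} (hab : a ≤ b)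
    (hf : ∀ x ∈ Icc a b, HasDerivWithinAt f (f' x) (Icc a b) x)
    (hf' : ContinuousOn f' (Icc a b))
    (hsign : (∀ x ∈ Icc a b, 0 ≤ f' x) ∨ ∀ x ∈ Icc a b, f' x ≤ 0) :
    ∫ x in a..b, |f' x| = |f b - f a| := by
  rw [← integral_eq_sub_of_hasDerivAt_of_le hab (fun x hx => (hf x hx).continuousWithinAt)
    (fun x hx => (hf x (Ioo_subset_Icc_self hx)).hasDerivAt (Icc_mem_nhds hx.1 hx.2))
    (hf'.intervalIntegrable_of_Icc hab)]
  rcases hsign with hpos | hneg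
  · rw [abs_of_nonneg (integral_nonneg hab hpos)]
    exact integral_congr fun x hx => abs_of_nonneg (hpos x (uIcc_of_le hab ▸ hx))
  · have habs : ∫ x in a..b, |f' x| = -∫ x in a..b, f' x := by
      rw [← intervalIntegral.integral_neg]
      exact integral_congr fun x hx => abs_of_nonpos (hneg x (uIcc_of_le hab ▸ hx))
    rw [habs, abs_of_nonpos]
    linarith [integral_nonneg (μ := volume) hab fun x _ => abs_nonneg (f' x)]

theorem norm_integral_cexp_I_mul_le_three_div {a b δ : ℝ} {φ g h : ℝ → ℝ} (hab : a ≤ b)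
    (hδ : 0 < δ) (hφ : ∀ x ∈ Icc a b, HasDerivWithinAt φ (g x) (Icc a b) x)
    (hg : ∀ x ∈ Icc a b, HasDerivWithinAt g (h x) (Icc a b) x) (hh : ContinuousOn h (Icc a b))
    (hgδ : ∀ x ∈ Icc a b, δ ≤ |g x|)
    (hsign : (∀ x ∈ Icc a b, 0 ≤ h x) ∨ ∀ x ∈ Icc a b, h x ≤ 0) :
    ‖∫ x in a..b, Complex.exp (Complex.I * φ x)‖ ≤ 3 / δ := by
  have hg0 : ∀ x ∈ Icc a b, g x ≠ 0 := fun x hx h0 => by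
    have := hgδ x hx
    rw [h0, abs_zero] at this
    linarith
  have hgc : ContinuousOn g (Icc a b) := fun x hx => (hg x hx).continuousWithinAt
  set e : ℝ → ℂ := fun x => Complex.exp (Complex.I * φ x)
  set ψ : ℝ → ℝ := fun x => -h x / g x ^ 2
  have he : ∀ x ∈ Icc a b, HasDerivWithinAt e (Complex.I * g x * e x) (Icc a b) x :=
    fun x hx => by simpa only [mul_comm] using ((hφ x hx).ofReal_comp.const_mul Complex.I).cexp
  have hinv : ∀ x ∈ Icc a b, HasDerivWithinAt (fun x => (g x)⁻¹) (ψ x) (Icc a b) x :=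
    fun x hx => (hg x hx).inv (hg0 x hx)
  have hψc : ContinuousOn ψ (Icc a b) :=
    hh.neg.div (hgc.pow 2) fun x hx => pow_ne_zero 2 (hg0 x hx)
  -- `e = (-I / g) * e'`, so integrating by parts leaves the boundary terms and `∫ (1/g)' e`.
  have hu : ∀ x ∈ [[a, b]], HasDerivWithinAt (fun x => -Complex.I * ((g x)⁻¹ : ℝ))
      (-Complex.I * ψ x) [[a, b]] x := by
    rw [uIcc_of_le hab]
    exact fun x hx => (hinv x hx).ofReal_comp.const_mul _
  have hparts := integral_mul_deriv_eq_deriv_mul_of_hasDerivWithinAt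
    (v' := fun x => Complex.I * g x * e x) hu (uIcc_of_le hab ▸ he)
    (ContinuousOn.intervalIntegrable_of_Icc hab (by fun_prop))
    (((continuousOn_const.mul (Complex.continuous_ofReal.comp_continuousOn hgc)).mul
      (fun x hx => (he x hx).continuousWithinAt)).intervalIntegrable_of_Icc hab)
  have hlhs :
      ∫ x in a..b, -Complex.I * ((g x)⁻¹ : ℝ) * (Complex.I * g x * e x) = ∫ x in a..b, e x :=
    integral_congr fun x hx => by
      have : (g x : ℂ) ≠ 0 := Complex.ofReal_ne_zero.2 (hg0 x (uIcc_of_le hab ▸ hx))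
      push_cast
      field_simp
      rw [Complex.I_sq]
      ring
  have hboundary : ∀ x ∈ Icc a b, ‖-Complex.I * ((g x)⁻¹ : ℝ) * e x‖ ≤ δ⁻¹ := fun x hx => by
    simpa [e, Complex.norm_exp] using inv_anti₀ hδ (hgδ x hx)
  have hvariation : |(g b)⁻¹ - (g a)⁻¹| ≤ δ⁻¹ := by
    have ha : a ∈ Icc a b := left_mem_Icc.2 hab
    have hb : b ∈ Icc a b := right_mem_Icc.2 hab
    rcases isPreconnected_Icc.forall_le_or_forall_le_neg_of_le_abs hδ hgc hgδ with hpos | hneg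
    · have := inv_anti₀ hδ (hpos a ha)
      have := inv_anti₀ hδ (hpos b hb)
      have := inv_pos.2 (hδ.trans_le (hpos a ha))
      have := inv_pos.2 (hδ.trans_le (hpos b hb))
      rw [abs_sub_le_iff]; constructor <;> linarith
    · have := inv_anti₀ hδ (le_neg.1 (hneg a ha))
      have := inv_anti₀ hδ (le_neg.1 (hneg b hb))
      have := inv_lt_zero.2 ((hneg a ha).trans_lt (neg_lt_zero.2 hδ))
      have := inv_lt_zero.2 ((hneg b hb).trans_lt (neg_lt_zero.2 hδ))
      rw [inv_neg] at *
      rw [abs_sub_le_iff]; constructor <;> linarith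
  have hremainder : ‖∫ x in a..b, -Complex.I * ψ x * e x‖ ≤ δ⁻¹ := calc
    _ ≤ ∫ x in a..b, ‖-Complex.I * ψ x * e x‖ := norm_integral_le_integral_norm hab
    _ = ∫ x in a..b, |ψ x| := integral_congr fun x _ => by simp [e, Complex.norm_exp]
    _ = |(g b)⁻¹ - (g a)⁻¹| := integral_abs_eq_abs_sub_of_hasDerivWithinAt hab hinv hψc (by
        rcases hsign with hpos | hneg
        · exact Or.inr fun x hx =>
            div_nonpos_of_nonpos_of_nonneg (neg_nonpos.2 (hpos x hx)) (sq_nonneg _)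
        · exact Or.inl fun x hx => div_nonneg (neg_nonneg.2 (hneg x hx)) (sq_nonneg _))
    _ ≤ δ⁻¹ := hvariation
  rw [← hlhs, hparts]
  calc _ ≤ ‖-Complex.I * ((g b)⁻¹ : ℝ) * e b‖ + ‖-Complex.I * ((g a)⁻¹ : ℝ) * e a‖
        + ‖∫ x in a..b, -Complex.I * ψ x * e x‖ :=
          (norm_sub_le _ _).trans (by gcongr; exact norm_sub_le _ _)
    _ ≤ δ⁻¹ + δ⁻¹ + δ⁻¹ := by
        gcongr
        exacts [hboundary b (right_mem_Icc.2 hab), hboundary a (left_mem_Icc.2 hab)]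
    _ = 3 / δ := by ring

def vanDerCorputConst (k : ℕ) : ℝ := 5 * 2 ^ (k - 1) - 2

theorem vanDerCorputConst_pos {k : ℕ} : 0 < vanDerCorputConst k := by
  have : (1 : ℝ) ≤ 2 ^ (k - 1) := one_le_pow₀ one_le_two
  unfold vanDerCorputConst
  linarith

theorem vanDerCorputConst_succ {k : ℕ} (hk : 1 ≤ k) :
    vanDerCorputConst (k + 1) = 2 * vanDerCorputConst k + 2 := by
  obtain ⟨k, rfl⟩ := Nat.exists_eq_add_of_le' hk
  simp only [vanDerCorputConst, Nat.add_sub_cancel, pow_succ]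
  ring

theorem norm_integral_le_vanDerCorputConst_succ {E : Type*} [NormedAddCommGroup E]
    [NormedSpace ℝ E] {f : ℝ → E} {g h : ℝ → ℝ} {k : ℕ} (hk : 1 ≤ k) {a b α : ℝ} (hab : a ≤ b)
    (hα : 0 < α) (hf : IntervalIntegrable f volume a b) (hf1 : ∀ x ∈ Icc a b, ‖f x‖ ≤ 1)
    (hg : ∀ x ∈ Icc a b, HasDerivWithinAt g (h x) (Icc a b) x)
    (hh : ContinuousOn h (Icc a b)) (hl : ∀ x ∈ Icc a b, α ≤ |h x|)
    (H : ∀ a' b' α', a ≤ a' → a' ≤ b' → b' ≤ b → 0 < α' → (∀ x ∈ Icc a' b', α' ≤ |g x|) →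
      ‖∫ x in a'..b', f x‖ ≤ vanDerCorputConst k / α' ^ ((1 : ℝ) / k)) :
    ‖∫ x in a..b, f x‖ ≤ vanDerCorputConst (k + 1) / α ^ ((1 : ℝ) / (k + 1 : ℕ)) := by
  set β := α ^ ((1 : ℝ) / (k + 1 : ℕ))
  have hβ : 0 < β := by positivity
  have hαδ : α * β⁻¹ = β ^ k := by
    have hβα : β ^ (k + 1) = α := by
      simp only [β, one_div]
      exact Real.rpow_inv_natCast_pow hα.le (by omega)
    rw [← hβα, pow_succ, mul_inv_cancel_right₀ hβ.ne']
  have hβk : (β ^ k) ^ ((1 : ℝ) / k) = β := by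
    rw [one_div, Real.pow_rpow_inv_natCast hβ.le (by omega)]
  calc ‖∫ x in a..b, f x‖ ≤ 2 * (vanDerCorputConst k / β) + 2 * β⁻¹ :=
        norm_integral_le_of_norm_integral_le_on_superlevel hab hα (by positivity)
          (div_nonneg vanDerCorputConst_pos.le hβ.le) hf hf1 hg hh hl
          fun a' b' h1 h2 h3 hfar => by
            rw [← hβk]
            exact H a' b' (β ^ k) h1 h2 h3 (by positivity) (hαδ ▸ hfar)
    _ = vanDerCorputConst (k + 1) / β := by rw [vanDerCorputConst_succ hk]; ring

def HasDerivChainOn (d : ℕ → ℝ → ℝ) (n : ℕ) (s : Set ℝ) : Prop :=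
  ∀ i < n, ∀ x ∈ s, HasDerivWithinAt (d i) (d (i + 1) x) s x

theorem HasDerivChainOn.mono {d : ℕ → ℝ → ℝ} {n : ℕ} {s t : Set ℝ} (hd : HasDerivChainOn d n s)
    (hts : t ⊆ s) : HasDerivChainOn d n t :=
  fun i hi x hx => (hd i hi x (hts hx)).mono hts

theorem ContDiffOn.hasDerivChainOn_iteratedDerivWithin {f : ℝ → ℝ} {n : ℕ} {s : Set ℝ}
    (hf : ContDiffOn ℝ n f s) (hs : UniqueDiffOn ℝ s) :
    HasDerivChainOn (fun i => iteratedDerivWithin i f s) n s := fun i hi x hx => by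
  simp only [iteratedDerivWithin_succ]
  exact ((hf.differentiableOn_iteratedDerivWithin (by exact_mod_cast hi) hs) x hx).hasDerivWithinAt

theorem norm_integral_cexp_I_mul_le_vanDerCorputConst_div {d : ℕ → ℝ → ℝ} {k : ℕ} (hk : 2 ≤ k)
    {a b α : ℝ} (hab : a ≤ b) (hα : 0 < α) (hd : HasDerivChainOn d k (Icc a b))
    (hdk : ContinuousOn (d k) (Icc a b)) (hl : ∀ x ∈ Icc a b, α ≤ |d k x|) :
    ‖∫ x in a..b, Complex.exp (Complex.I * d 0 x)‖ ≤ vanDerCorputConst k / α ^ ((1 : ℝ) / k) := by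
  have hf : IntervalIntegrable (fun x => Complex.exp (Complex.I * d 0 x)) volume a b :=
    ContinuousOn.intervalIntegrable_of_Icc hab fun x hx =>
      ((hd 0 (by omega) x hx).ofReal_comp.const_mul Complex.I).cexp.continuousWithinAt
  have hf1 : ∀ x ∈ Icc a b, ‖Complex.exp (Complex.I * d 0 x)‖ ≤ 1 := fun x _ => by
    simp [Complex.norm_exp]
  induction k, hk using Nat.le_induction generalizing a b α with
  | base =>
    have hsign := isPreconnected_Icc.forall_le_or_forall_le_neg_of_le_abs hα hdk hl
    refine norm_integral_le_vanDerCorputConst_succ le_rfl hab hα hf hf1 (hd 1 one_lt_two) hdk hl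
      fun a' b' α' h1 h2 h3 hα' hl' => ?_
    have hsub : Icc a' b' ⊆ Icc a b := Icc_subset_Icc h1 h3
    have := norm_integral_cexp_I_mul_le_three_div h2 hα'
      (fun x hx => (hd 0 two_pos x (hsub hx)).mono hsub)
      (fun x hx => (hd 1 one_lt_two x (hsub hx)).mono hsub) (hdk.mono hsub) hl'
      (hsign.imp (fun h x hx => hα.le.trans (h x (hsub hx)))
        fun h x hx => (h x (hsub hx)).trans (neg_nonpos.2 hα.le))
    have hconst : vanDerCorputConst 1 / α' ^ ((1 : ℝ) / (1 : ℕ)) = 3 / α' := by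
      norm_num [vanDerCorputConst]
    rwa [hconst]
  | succ k hk ih =>
    refine norm_integral_le_vanDerCorputConst_succ (by omega) hab hα hf hf1
      (hd k k.lt_succ_self) hdk hl fun a' b' α' h1 h2 h3 hα' hl' => ?_
    have hsub : Icc a' b' ⊆ Icc a b := Icc_subset_Icc h1 h3
    exact ih h2 hα' (fun i hi => (hd.mono hsub) i (hi.trans k.lt_succ_self))
      (fun x hx => ((hd k k.lt_succ_self x (hsub hx)).mono hsub).continuousWithinAt) hl'
      (hf.mono_set (by rw [uIcc_of_le hab, uIcc_of_le h2]; exact hsub))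
      fun x hx => hf1 x (hsub hx)

theorem norm_integral_mul_le_of_norm_integral_le {A : Type*} [NormedRing A] [NormedAlgebra ℝ A]
    [CompleteSpace A] {f η η' : ℝ → A} {a b C : ℝ} (hab : a ≤ b) (hf : ContinuousOn f (Icc a b))
    (hη : ∀ x ∈ Icc a b, HasDerivWithinAt η (η' x) (Icc a b) x)
    (hη' : IntervalIntegrable η' volume a b) (hC : ∀ x ∈ Icc a b, ‖∫ t in a..x, f t‖ ≤ C) :
    ‖∫ x in a..b, f x * η x‖ ≤ C * (‖η b‖ + ∫ x in a..b, ‖η' x‖) := by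
  set F : ℝ → A := fun x => ∫ t in a..x, f t
  have hfi : IntervalIntegrable f volume a b := hf.intervalIntegrable_of_Icc hab
  have hηc : ContinuousOn η (Icc a b) := fun x hx => (hη x hx).continuousWithinAt
  have hFc : ContinuousOn F [[a, b]] := continuousOn_primitive_interval (by
    rw [uIcc_of_le hab]; exact hf.integrableOn_Icc)
  have hF : ∀ x ∈ Ioo (min a b) (max a b), HasDerivAt F (f x) x := by
    rw [min_eq_left hab, max_eq_right hab]
    intro x hx
    exact integral_hasDerivAt_right (hfi.mono_set (by
        rw [uIcc_of_le hab, uIcc_of_le hx.1.le]; exact Icc_subset_Icc_right hx.2.le))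
      ((hf.mono Ioo_subset_Icc_self).stronglyMeasurableAtFilter isOpen_Ioo x hx)
      (hf.continuousAt (Icc_mem_nhds hx.1 hx.2))
  have hparts := integral_deriv_mul_eq_sub_of_hasDerivAt hFc (uIcc_of_le hab ▸ hηc) hF
    (by rw [min_eq_left hab, max_eq_right hab]
        exact fun x hx => (hη x (Ioo_subset_Icc_self hx)).hasDerivAt (Icc_mem_nhds hx.1 hx.2))
    hfi hη'
  rw [integral_add (f := fun x => f x * η x) ((hf.mul hηc).intervalIntegrable_of_Icc hab)
      (hη'.continuousOn_mul hFc),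
    show F a = 0 from integral_same, zero_mul, sub_zero, ← eq_sub_iff_add_eq] at hparts
  have hb : ‖F b * η b‖ ≤ C * ‖η b‖ :=
    (norm_mul_le _ _).trans (by gcongr; exact hC b (right_mem_Icc.2 hab))
  have hrest : ‖∫ x in a..b, F x * η' x‖ ≤ C * ∫ x in a..b, ‖η' x‖ := by
    rw [← intervalIntegral.integral_const_mul]
    refine norm_integral_le_of_norm_le hab (Filter.Eventually.of_forall fun x hx => ?_)
      (hη'.norm.const_mul C)
    exact (norm_mul_le _ _).trans (by gcongr; exact hC x (Ioc_subset_Icc_self hx))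
  rw [hparts, mul_add]
  exact (norm_sub_le _ _).trans (add_le_add hb hrest)

/-- Van der Corput lemma with amplitude: if `φ` is `C^k` on `[a,b]` with
`|φ^{(k)}| ≥ α > 0` there, `k ≥ 2`, then for every `C¹` amplitude `η` on `[a,b]`,
`|∫_a^b e^{iφ} η| ≤ (c_k / α^{1/k}) (|η(b)| + ∫_a^b |η'|)` with
`c_k = 5·2^{k−1} − 2`. -/
theorem van_der_corput_amplitude (k : ℕ) (hk : 2 ≤ k) (a b : ℝ) (hab : a ≤ b)
    (φ : ℝ → ℝ) (hφ : ContDiffOn ℝ (k : ℕ∞) φ (Set.Icc a b))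
    (α : ℝ) (hα : 0 < α)
    (hlow : ∀ x ∈ Set.Icc a b, α ≤ |iteratedDerivWithin k φ (Set.Icc a b) x|)
    (η : ℝ → ℂ) (hη : ContDiffOn ℝ 1 η (Set.Icc a b)) :
    ‖∫ x in a..b, Complex.exp (Complex.I * ((φ x : ℝ) : ℂ)) * η x‖ ≤
      ((5 * 2 ^ (k - 1) - 2 : ℝ) / α ^ ((1 : ℝ) / k)) *
        (‖η b‖ + ∫ x in a..b, ‖derivWithin η (Set.Icc a b) x‖) := by
  obtain rfl | hlt := hab.eq_or_lt
  · rw [integral_same, integral_same, norm_zero, add_zero]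
    exact mul_nonneg (div_nonneg vanDerCorputConst_pos.le (by positivity)) (norm_nonneg _)
  have hs : UniqueDiffOn ℝ (Icc a b) := uniqueDiffOn_Icc hlt
  have hφc := hφ.continuousOn
  refine norm_integral_mul_le_of_norm_integral_le hab (by fun_prop)
    (fun x hx => (hη.differentiableOn one_ne_zero x hx).hasDerivWithinAt)
    ((hη.continuousOn_derivWithin hs le_rfl).intervalIntegrable_of_Icc hab) fun x hx => ?_
  have hsub : Icc a x ⊆ Icc a b := Icc_subset_Icc_right hx.2
  have := norm_integral_cexp_I_mul_le_vanDerCorputConst_div hk hx.1 hα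
    ((hφ.hasDerivChainOn_iteratedDerivWithin hs).mono hsub)
    ((hφ.continuousOn_iteratedDerivWithin le_rfl hs).mono hsub) fun t ht => hlow t (hsub ht)
  rwa [iteratedDerivWithin_zero] at this
end

section
/- Let η ∈ C_0^∞(ℝ^d) whose support contains a neighborhood of 0, Q(y) = ∑_j ε_j y_j² with ε_j ∈ {±1}, and 1 ≤ k ≤ d. There is a constant C such that |∫_{ℝ^d} e^{itQ(y)} e^{−|y|²} y_k η(y) dy| ≤ C |t|^{−(d+1)/2} ( ‖η‖_∞ + ∑_{j=1}^d max_{0≤m≤d+2} ‖∂_j^{(m)}( e^{−y_j²} η )‖_∞ ) for all |t| ≥ 1. -/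
open MeasureTheory

open Complex FourierTransform SchwartzMap
open scoped Real RealInnerProductSpace

noncomputable section

namespace GaussCoordAux

/-- `|e^z - 1| ≤ 2 √|z|` when `Re z ≤ 0`. -/
lemma abs_exp_sub_one_le_sqrt {z : ℂ} (hz : z.re ≤ 0) :
    ‖Complex.exp z - 1‖ ≤ 2 * Real.sqrt (‖z‖) := by
  have h0 : (0:ℝ) ≤ ‖z‖ := norm_nonneg _
  rcases le_or_gt (‖z‖) 1 with h | h
  · refine (Complex.norm_exp_sub_one_le h).trans ?_
    have h1 : Real.sqrt (‖z‖) ≤ 1 := Real.sqrt_le_one.2 h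
    nlinarith [Real.sq_sqrt h0, Real.sqrt_nonneg (‖z‖)]
  · have h1 : ‖Complex.exp z‖ ≤ 1 := by
      rw [Complex.norm_exp]
      exact Real.exp_le_one_iff.2 hz
    have h2 : (1:ℝ) ≤ Real.sqrt (‖z‖) := by
      rw [show (1:ℝ) = Real.sqrt 1 from (Real.sqrt_one).symm]
      exact Real.sqrt_le_sqrt h.le
    calc ‖Complex.exp z - 1‖ ≤ ‖Complex.exp z‖ + 1 := by
          simpa using (norm_sub_le_norm_sub_add_norm_sub (Complex.exp z) 0 1).trans (by simp)
      _ ≤ 2 * Real.sqrt (‖z‖) := by linarith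


lemma norm_prod_cpow_le {d : ℕ} {b : Fin d → ℂ} {T : ℝ} (hT : 0 < T)
    (habs : ∀ j, T ≤ ‖b j‖) :
    ‖∏ j, ((π : ℂ) / b j) ^ (1/2 : ℂ)‖ ≤ (π / T) ^ ((d : ℝ)/2) := by
  have hb0 : ∀ j, b j ≠ 0 := fun j h => by
    have := habs j; rw [h] at this; simp at this; linarith
  have hterm : ∀ j, ‖((π : ℂ) / b j) ^ (1/2 : ℂ)‖ ≤ (π / T) ^ ((1:ℝ)/2) := by
    intro j
    have hz : ((π : ℂ) / b j) ≠ 0 := by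
      apply div_ne_zero _ (hb0 j)
      exact_mod_cast Real.pi_ne_zero
    rw [Complex.norm_cpow_of_ne_zero hz]
    simp only [Complex.div_ofNat_im, Complex.one_im, Complex.div_ofNat_re, Complex.one_re]
    rw [show ((0:ℝ)/2) = 0 by norm_num, mul_zero, Real.exp_zero, div_one]
    have habs' : ‖(π:ℂ) / b j‖ = π / ‖b j‖ := by
      rw [norm_div, Complex.norm_real, Real.norm_eq_abs, abs_of_pos Real.pi_pos]
    rw [habs']
    apply Real.rpow_le_rpow (by positivity) _ (by norm_num)
    exact div_le_div_of_nonneg_left Real.pi_pos.le hT (habs j)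
  calc ‖∏ j, ((π : ℂ) / b j) ^ (1/2 : ℂ)‖ = ∏ j, ‖((π : ℂ) / b j) ^ (1/2 : ℂ)‖ := by
        rw [norm_prod]
    _ ≤ ∏ _j : Fin d, (π / T) ^ ((1:ℝ)/2) :=
        Finset.prod_le_prod (fun j _ => norm_nonneg _) (fun j _ => hterm j)
    _ = (π / T) ^ ((d : ℝ)/2) := by
        rw [Finset.prod_const, Finset.card_univ, Fintype.card_fin,
          ← Real.rpow_natCast ((π / T) ^ ((1:ℝ)/2)) d, ← Real.rpow_mul (by positivity)]
        congr 1
        ring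


lemma Hdiff_bound {d : ℕ} {b : Fin d → ℂ} {T : ℝ} (hT : 1 ≤ T)
    (habs : ∀ j, T ≤ ‖b j‖) (hre : ∀ j, 0 ≤ (b j).re)
    (ξ : EuclideanSpace ℝ (Fin d)) :
    ‖(∏ j, ((π:ℂ) / b j) ^ (1/2 : ℂ) *
        Complex.exp ((((-2 * π * ξ j : ℝ) : ℂ) * Complex.I)^2 / (4 * b j)))
      - ∏ j, ((π:ℂ) / b j) ^ (1/2 : ℂ)‖ ≤
      (2 * π ^ ((d:ℝ)/2 + 1) / T ^ (((d:ℝ)+1)/2)) * ‖ξ‖ := by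
  have hT0 : 0 < T := lt_of_lt_of_le one_pos hT
  set z : Fin d → ℂ := fun j => ((((-2) * π * ξ j : ℝ) : ℂ) * Complex.I)^2/(4*b j) with hz
  have hzj : ∀ j, z j = ((-(π^2 * (ξ j)^2) : ℝ) : ℂ) / b j := by
    intro j
    rw [hz]
    push_cast
    rw [mul_pow, Complex.I_sq]
    ring
  set Z : ℂ := ∑ j, z j with hZ
  have hZre : Z.re ≤ 0 := by
    rw [hZ, Complex.re_sum]
    apply Finset.sum_nonpos
    intro j _
    rw [hzj j, div_eq_mul_inv, Complex.re_ofReal_mul]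
    apply mul_nonpos_of_nonpos_of_nonneg
    · simp [sq_nonneg]
      positivity
    · rw [Complex.inv_re]
      exact div_nonneg (hre j) (Complex.normSq_nonneg _)
  have hnormξ : ‖ξ‖^2 = ∑ j, (ξ j)^2 := by
    rw [EuclideanSpace.norm_eq, Real.sq_sqrt (Finset.sum_nonneg fun j _ => by positivity)]
    simp [Real.norm_eq_abs, sq_abs]
  have habsZ : ‖Z‖ ≤ π^2 * ‖ξ‖^2 / T := by
    calc ‖Z‖ ≤ ∑ j, ‖z j‖ := by
          rw [hZ]; simpa using norm_sum_le (Finset.univ : Finset (Fin d)) z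
      _ ≤ ∑ j, π^2 * (ξ j)^2 / T := by
          apply Finset.sum_le_sum
          intro j _
          simp only [hzj, norm_div, Complex.norm_real, Real.norm_eq_abs, abs_neg]
          rw [_root_.abs_of_nonneg (by positivity : (0:ℝ) ≤ π^2 * ξ j^2)]
          exact div_le_div_of_nonneg_left (by positivity) hT0 (habs j)
      _ = π^2 * ‖ξ‖^2 / T := by
          rw [hnormξ, Finset.mul_sum, Finset.sum_div]
  have hexp : ‖Complex.exp Z - 1‖ ≤ 2 * (π * ‖ξ‖ / Real.sqrt T) := by
    refine (abs_exp_sub_one_le_sqrt hZre).trans ?_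
    have h1 : Real.sqrt (‖Z‖) ≤ Real.sqrt (π^2 * ‖ξ‖^2 / T) :=
      Real.sqrt_le_sqrt habsZ
    have h2 : Real.sqrt (π^2 * ‖ξ‖^2 / T) = π * ‖ξ‖ / Real.sqrt T := by
      rw [Real.sqrt_div (by positivity), show π^2*‖ξ‖^2 = (π*‖ξ‖)^2 by ring,
        Real.sqrt_sq (by positivity)]
    linarith
  have hP := norm_prod_cpow_le hT0 habs
  have hfact : (∏ j, ((π:ℂ) / b j) ^ (1/2 : ℂ) *
        Complex.exp ((((-2 * π * ξ j : ℝ) : ℂ) * Complex.I)^2 / (4 * b j)))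
      - ∏ j, ((π:ℂ) / b j) ^ (1/2 : ℂ)
      = (∏ j, ((π:ℂ) / b j) ^ (1/2 : ℂ)) * (Complex.exp Z - 1) := by
    rw [Finset.prod_mul_distrib, ← Complex.exp_sum, mul_sub, mul_one]
  rw [hfact, norm_mul]
  calc ‖∏ j, ((π:ℂ) / b j) ^ (1/2 : ℂ)‖ * ‖Complex.exp Z - 1‖
      ≤ (π / T) ^ ((d : ℝ)/2) * (2 * (π * ‖ξ‖ / Real.sqrt T)) :=
        mul_le_mul hP hexp (norm_nonneg _) (by positivity)
    _ = (2 * π ^ ((d:ℝ)/2 + 1) / T ^ (((d:ℝ)+1)/2)) * ‖ξ‖ := by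
        rw [Real.div_rpow Real.pi_pos.le hT0.le, Real.sqrt_eq_rpow,
          Real.rpow_add_one Real.pi_pos.ne',
          show ((d:ℝ)+1)/2 = (d:ℝ)/2 + 1/2 by ring, Real.rpow_add hT0]
        have h1 : T ^ ((d:ℝ)/2) ≠ 0 := by positivity
        have h2 : T ^ ((1:ℝ)/2) ≠ 0 := by positivity
        field_simp


lemma Hnorm_bound {d : ℕ} {b : Fin d → ℂ} {T : ℝ} (hT : 1 ≤ T)
    (habs : ∀ j, T ≤ ‖b j‖) (hre : ∀ j, 0 ≤ (b j).re)
    (ξ : EuclideanSpace ℝ (Fin d)) :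
    ‖∏ j, ((π:ℂ) / b j) ^ (1/2 : ℂ) *
        Complex.exp ((((-2 * π * ξ j : ℝ) : ℂ) * Complex.I)^2 / (4 * b j))‖ ≤
      (π / T) ^ ((d:ℝ)/2) := by
  have hT0 : 0 < T := lt_of_lt_of_le one_pos hT
  set z : Fin d → ℂ := fun j => ((((-2) * π * ξ j : ℝ) : ℂ) * Complex.I)^2/(4*b j) with hz
  have hzj : ∀ j, z j = ((-(π^2 * (ξ j)^2) : ℝ) : ℂ) / b j := by
    intro j
    rw [hz]
    push_cast
    rw [mul_pow, Complex.I_sq]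
    ring
  have hZre : (∑ j, z j).re ≤ 0 := by
    rw [Complex.re_sum]
    apply Finset.sum_nonpos
    intro j _
    rw [hzj j, div_eq_mul_inv, Complex.re_ofReal_mul]
    apply mul_nonpos_of_nonpos_of_nonneg
    · simp [sq_nonneg]
      positivity
    · rw [Complex.inv_re]
      exact div_nonneg (hre j) (Complex.normSq_nonneg _)
  rw [Finset.prod_mul_distrib, ← Complex.exp_sum, norm_mul]
  calc ‖∏ j, ((π:ℂ) / b j) ^ (1/2 : ℂ)‖ * ‖Complex.exp (∑ j, z j)‖
      ≤ (π / T) ^ ((d:ℝ)/2) * 1 := by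
        apply mul_le_mul (norm_prod_cpow_le hT0 habs) _ (norm_nonneg _) (by positivity)
        rw [Complex.norm_exp]
        exact Real.exp_le_one_iff.2 hZre
    _ = (π / T) ^ ((d:ℝ)/2) := mul_one _

/-- Any smooth compactly supported function is a Schwartz function. -/
def toSchwartz {E : Type*} [NormedAddCommGroup E] [NormedSpace ℝ E]
    (f : E → ℂ) (hf : ContDiff ℝ (⊤ : ℕ∞) f) (hcpt : HasCompactSupport f) : SchwartzMap E ℂ where
  toFun := f
  smooth' := hf.of_le (by simp)
  decay' := by
    intro k n
    have h1 : HasCompactSupport (iteratedFDeriv ℝ n f) := hcpt.iteratedFDeriv n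
    have h2 : HasCompactSupport (fun x => ‖x‖^k * ‖iteratedFDeriv ℝ n f x‖) := by
      have h3 : HasCompactSupport (fun x => ‖iteratedFDeriv ℝ n f x‖) :=
        h1.comp_left (g := fun z => ‖z‖) norm_zero
      exact h3.mul_left
    have hc : Continuous (fun x => ‖x‖^k * ‖iteratedFDeriv ℝ n f x‖) :=
      (continuous_norm.pow k).mul (hf.continuous_iteratedFDeriv (by exact_mod_cast le_top)).norm
    obtain ⟨C, hC⟩ := h2.exists_bound_of_continuous hc
    exact ⟨C, fun x => by simpa using hC x⟩

@[simp] lemma toSchwartz_apply {E : Type*} [NormedAddCommGroup E] [NormedSpace ℝ E]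
    (f : E → ℂ) (hf : ContDiff ℝ (⊤ : ℕ∞) f) (hcpt : HasCompactSupport f) (x : E) :
    toSchwartz f hf hcpt x = f x := rfl


/-- The Fourier transform of the complex Gaussian. -/
lemma fourier_gauss {d : ℕ} {b : Fin d → ℂ} (hb : ∀ j, 0 < (b j).re)
    (ξ : EuclideanSpace ℝ (Fin d)) :
    𝓕 (fun y : EuclideanSpace ℝ (Fin d) => Complex.exp (∑ j, -(b j) * (y j : ℂ)^2)) ξ =
      ∏ j, ((π:ℂ) / b j) ^ (1/2 : ℂ) *
        Complex.exp ((((-2 * π * ξ j : ℝ) : ℂ) * Complex.I)^2 / (4 * b j)) := by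
  rw [Real.fourier_eq']
  rw [← ((EuclideanSpace.volume_preserving_symm_measurableEquiv_toLp (Fin d)).symm).integral_comp']
  have hptwise : ∀ v : Fin d → ℝ,
      Complex.exp (↑(-2 * π * ⟪((MeasurableEquiv.toLp 2 (Fin d → ℝ)) v), ξ⟫) * Complex.I) •
        Complex.exp (∑ j, -(b j) * ((((MeasurableEquiv.toLp 2 (Fin d → ℝ)) v) j : ℝ) : ℂ)^2)
      = Complex.exp (-∑ j, b j * (v j : ℂ)^2 + ∑ j, (((-2 * π * ξ j : ℝ) : ℂ) * Complex.I) * v j) := by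
    intro v
    have hcoord : ∀ j, ((MeasurableEquiv.toLp 2 (Fin d → ℝ)) v) j = v j := fun j => rfl
    have hinner : ⟪((MeasurableEquiv.toLp 2 (Fin d → ℝ)) v), ξ⟫ = ∑ j, v j * ξ j := by
      simp [PiLp.inner_apply, RCLike.inner_apply, hcoord]
      exact Finset.sum_congr rfl fun j _ => mul_comm _ _
    rw [smul_eq_mul, ← Complex.exp_add, hinner]
    congr 1
    simp only [hcoord]
    push_cast
    rw [Finset.mul_sum, Finset.sum_mul, ← Finset.sum_neg_distrib, ← Finset.sum_add_distrib,
      ← Finset.sum_add_distrib]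
    apply Finset.sum_congr rfl
    intro j _
    ring
  calc (∫ v : Fin d → ℝ,
        Complex.exp (↑(-2 * π * ⟪((MeasurableEquiv.toLp 2 (Fin d → ℝ)) v), ξ⟫) * Complex.I) •
          Complex.exp (∑ j, -(b j) * ((((MeasurableEquiv.toLp 2 (Fin d → ℝ)) v) j : ℝ) : ℂ)^2))
      = ∫ v : Fin d → ℝ,
          Complex.exp (-∑ j, b j * (v j : ℂ)^2 + ∑ j, (((-2 * π * ξ j : ℝ) : ℂ) * Complex.I) * v j) := by
        exact integral_congr_ae (Filter.Eventually.of_forall hptwise)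
    _ = ∏ j, ((π:ℂ) / b j) ^ (1/2 : ℂ) *
        Complex.exp ((((-2 * π * ξ j : ℝ) : ℂ) * Complex.I)^2 / (4 * b j)) := by
        exact GaussianFourier.integral_cexp_neg_sum_mul_add hb _


theorem aux (d : ℕ) (ε : Fin d → ℝ) (hε : ∀ j, ε j = 1 ∨ ε j = -1)
    (g : EuclideanSpace ℝ (Fin d) → ℂ) (hg : ContDiff ℝ (⊤ : ℕ∞) g)
    (hgc : HasCompactSupport g) (hg0 : g 0 = 0) :
    ∃ A : ℝ, 0 ≤ A ∧ ∀ t : ℝ, 1 ≤ |t| →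
      ‖∫ y : EuclideanSpace ℝ (Fin d),
          Complex.exp (∑ j, (Complex.I * t * ε j - 1) * (y j : ℂ) ^ 2) * g y‖ ≤
        A / |t| ^ (((d : ℝ) + 1) / 2) := by
  classical
  let gS : SchwartzMap (EuclideanSpace ℝ (Fin d)) ℂ := toSchwartz g hg hgc
  have hgS : ⇑gS = g := funext fun x => toSchwartz_apply g hg hgc x
  let ψ : SchwartzMap (EuclideanSpace ℝ (Fin d)) ℂ := (FourierTransform.fourierCLE ℝ (SchwartzMap (EuclideanSpace ℝ (Fin d)) ℂ)).symm gS
  have hψg : 𝓕 (⇑ψ) = g := by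
    rw [← hgS, ← SchwartzMap.fourier_coe, ← FourierTransform.fourierCLE_apply (R := ℝ) ψ,
      (FourierTransform.fourierCLE ℝ (SchwartzMap (EuclideanSpace ℝ (Fin d)) ℂ)).apply_symm_apply gS]
  have hψint : Integrable (⇑ψ) := ψ.integrable
  have hψ0 : (∫ ξ : EuclideanSpace ℝ (Fin d), ψ ξ) = 0 := by
    have h0 : 𝓕 (⇑ψ) 0 = ∫ ξ : EuclideanSpace ℝ (Fin d), ψ ξ := by
      rw [Real.fourier_eq]
      simp
    rw [← h0, hψg, hg0]
  have hM : Integrable (fun ξ : EuclideanSpace ℝ (Fin d) => ‖ξ‖ * ‖ψ ξ‖) := by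
    simpa using ψ.integrable_pow_mul volume 1
  have hMnonneg : 0 ≤ ∫ ξ : EuclideanSpace ℝ (Fin d), ‖ξ‖ * ‖ψ ξ‖ :=
    integral_nonneg fun ξ => by positivity
  refine ⟨2 * π ^ ((d:ℝ)/2 + 1) * ∫ ξ : EuclideanSpace ℝ (Fin d), ‖ξ‖ * ‖ψ ξ‖,
    by positivity, fun t ht => ?_⟩
  have ht0 : (0:ℝ) < |t| := lt_of_lt_of_le one_pos ht
  set b : Fin d → ℂ := fun j => 1 - Complex.I * t * ε j with hbdef
  have hbre : ∀ j, (b j).re = 1 := fun j => by simp [hbdef]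
  have hbpos : ∀ j, 0 < (b j).re := fun j => by rw [hbre]; norm_num
  have hbre0 : ∀ j, 0 ≤ (b j).re := fun j => (hbpos j).le
  have hbabs : ∀ j, |t| ≤ ‖b j‖ := by
    intro j
    have him : (b j).im = -(t * ε j) := by simp [hbdef]
    have h2 : |(b j).im| ≤ ‖b j‖ := Complex.abs_im_le_norm _
    rw [him, abs_neg, abs_mul] at h2
    rcases hε j with h | h <;> simp [h] at h2 <;> linarith
  set G : EuclideanSpace ℝ (Fin d) → ℂ :=
    fun y => Complex.exp (∑ j, -(b j) * (y j : ℂ)^2) with hGdef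
  have hGint : Integrable G := by
    rw [← MeasurePreserving.integrable_comp_emb
      (EuclideanSpace.volume_preserving_symm_measurableEquiv_toLp (Fin d)).symm
      (MeasurableEquiv.measurableEmbedding _)]
    have : (G ∘ ⇑(MeasurableEquiv.toLp 2 (Fin d → ℝ))) =
        fun v : Fin d → ℝ => Complex.exp (-∑ j, b j * (v j : ℂ)^2 + ∑ j, (0:ℂ) * v j) := by
      funext v
      simp only [Function.comp_apply, hGdef]
      congr 1
      rw [← Finset.sum_neg_distrib]
      simp only [zero_mul, Finset.sum_const_zero, add_zero]
      exact Finset.sum_congr rfl fun x _ => by rw [neg_mul]; rfl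
    rw [MeasurableEquiv.symm_symm, this]
    exact GaussianFourier.integrable_cexp_neg_sum_mul_add hbpos _
  set H : EuclideanSpace ℝ (Fin d) → ℂ := fun ξ => ∏ j, ((π:ℂ) / b j) ^ (1/2 : ℂ) *
      Complex.exp ((((-2 * π * ξ j : ℝ) : ℂ) * Complex.I)^2 / (4 * b j)) with hHdef
  have hFG : ∀ ξ, 𝓕 G ξ = H ξ := fun ξ => fourier_gauss hbpos ξ
  have hH0 : H 0 = ∏ j, ((π:ℂ) / b j) ^ (1/2 : ℂ) := by
    simp [hHdef, show ∀ j : Fin d, (0 : EuclideanSpace ℝ (Fin d)) j = (0:ℝ) from fun j => rfl]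
  have hHC : Continuous H := by
    apply continuous_finset_prod
    intro j _
    apply continuous_const.mul
    apply Complex.continuous_exp.comp
    apply Continuous.div_const
    apply Continuous.pow
    apply Continuous.mul _ continuous_const
    exact Complex.continuous_ofReal.comp (by fun_prop)
  have hHψint : Integrable (fun ξ : EuclideanSpace ℝ (Fin d) => H ξ * ψ ξ) :=
    hψint.bdd_mul hHC.aestronglyMeasurable (Filter.Eventually.of_forall fun ξ => Hnorm_bound ht hbabs hbre0 ξ)
  -- Parseval
  have parseval : ∫ ξ : EuclideanSpace ℝ (Fin d), 𝓕 G ξ * ψ ξ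
      = ∫ x : EuclideanSpace ℝ (Fin d), G x * g x := by
    have h := VectorFourier.integral_fourierIntegral_smul_eq_flip
      (L := innerₗ (EuclideanSpace ℝ (Fin d)))
      Real.continuous_fourierChar continuous_inner hGint hψint
    simp only [flip_innerₗ, smul_eq_mul] at h
    calc ∫ ξ : EuclideanSpace ℝ (Fin d), 𝓕 G ξ * ψ ξ
        = ∫ x : EuclideanSpace ℝ (Fin d), G x * 𝓕 (⇑ψ) x := h
      _ = ∫ x : EuclideanSpace ℝ (Fin d), G x * g x := by rw [hψg]
  -- put the chain together
  have hchain : (∫ y : EuclideanSpace ℝ (Fin d),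
        Complex.exp (∑ j, (Complex.I * t * ε j - 1) * (y j : ℂ) ^ 2) * g y)
      = ∫ ξ : EuclideanSpace ℝ (Fin d), (H ξ - H 0) * ψ ξ := by
    have e1 : (∫ y : EuclideanSpace ℝ (Fin d),
          Complex.exp (∑ j, (Complex.I * t * ε j - 1) * (y j : ℂ) ^ 2) * g y)
        = ∫ x : EuclideanSpace ℝ (Fin d), G x * g x := by
      apply integral_congr_ae (Filter.Eventually.of_forall fun y => ?_)
      congr 2
      apply Finset.sum_congr rfl
      intro j _
      rw [hbdef]
      ring
    have e2 : (∫ ξ : EuclideanSpace ℝ (Fin d), (H ξ - H 0) * ψ ξ)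
        = ∫ ξ : EuclideanSpace ℝ (Fin d), H ξ * ψ ξ := by
      simp_rw [sub_mul]
      rw [integral_sub hHψint (hψint.const_mul _), integral_const_mul, hψ0, mul_zero, sub_zero]
    rw [e1, e2, ← parseval]
    exact integral_congr_ae (Filter.Eventually.of_forall fun ξ => by simp only [hFG])
  rw [hchain]
  have hdiffbd : ∀ ξ : EuclideanSpace ℝ (Fin d), ‖(H ξ - H 0) * ψ ξ‖ ≤
      (2 * π ^ ((d:ℝ)/2 + 1) / |t| ^ (((d:ℝ)+1)/2)) * (‖ξ‖ * ‖ψ ξ‖) := by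
    intro ξ
    have hd : ‖H ξ - H 0‖ ≤ (2 * π ^ ((d:ℝ)/2 + 1) / |t| ^ (((d:ℝ)+1)/2)) * ‖ξ‖ := by
      rw [hH0, hHdef]
      exact Hdiff_bound ht hbabs hbre0 ξ
    calc ‖(H ξ - H 0) * ψ ξ‖ = ‖H ξ - H 0‖ * ‖ψ ξ‖ := norm_mul _ _
      _ ≤ ((2 * π ^ ((d:ℝ)/2 + 1) / |t| ^ (((d:ℝ)+1)/2)) * ‖ξ‖) * ‖ψ ξ‖ :=
          mul_le_mul_of_nonneg_right hd (norm_nonneg _)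
      _ = (2 * π ^ ((d:ℝ)/2 + 1) / |t| ^ (((d:ℝ)+1)/2)) * (‖ξ‖ * ‖ψ ξ‖) := mul_assoc _ _ _
  calc ‖∫ ξ : EuclideanSpace ℝ (Fin d), (H ξ - H 0) * ψ ξ‖
      ≤ ∫ ξ : EuclideanSpace ℝ (Fin d), ‖(H ξ - H 0) * ψ ξ‖ :=
        norm_integral_le_integral_norm _
    _ ≤ ∫ ξ : EuclideanSpace ℝ (Fin d),
          (2 * π ^ ((d:ℝ)/2 + 1) / |t| ^ (((d:ℝ)+1)/2)) * (‖ξ‖ * ‖ψ ξ‖) := by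
        apply integral_mono ?_ (hM.const_mul _) hdiffbd
        apply ((hHψint.sub (hψint.const_mul (H 0))).norm.congr ?_)
        exact Filter.Eventually.of_forall fun ξ => by
          simp only [Pi.sub_apply]
          rw [sub_mul]
    _ = 2 * π ^ ((d:ℝ)/2 + 1) * (∫ ξ : EuclideanSpace ℝ (Fin d), ‖ξ‖ * ‖ψ ξ‖)
          / |t| ^ (((d:ℝ)+1)/2) := by
        rw [integral_const_mul]
        ring


end GaussCoordAux

open GaussCoordAux

/-- If `η` is smooth with compact support whose support contains a neighborhood
of the origin, `Q(y) = ∑ⱼ εⱼ yⱼ²` with `εⱼ ∈ {±1}`, and `1 ≤ k ≤ d` (here `k`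
is a coordinate index), then
`|∫ e^{itQ} e^{−|y|²} y_k η| ≤ C |t|^{−(d+1)/2} (‖η‖_∞ + ∑ⱼ max_{0≤m≤d+2} ‖∂ⱼ^{(m)}(e^{−yⱼ²} η)‖_∞)`
for all `|t| ≥ 1`. -/
theorem gaussian_with_coordinate_factor (d : ℕ) (ε : Fin d → ℝ)
    (hε : ∀ j, ε j = 1 ∨ ε j = -1)
    (η : (Fin d → ℝ) → ℂ) (hη : ContDiff ℝ (⊤ : ℕ∞) η) (hcpt : HasCompactSupport η)
    (hnbhd : tsupport η ∈ nhds (0 : Fin d → ℝ))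
    (k : Fin d) :
    ∃ C : ℝ, ∀ t : ℝ, 1 ≤ |t| →
      ‖∫ y : Fin d → ℝ,
          Complex.exp (Complex.I * (t : ℂ) * ((∑ j, ε j * y j ^ 2 : ℝ) : ℂ)) *
            (Real.exp (-(∑ j, y j ^ 2)) : ℂ) * ((y k : ℝ) : ℂ) * η y‖ ≤
        (C / |t| ^ (((d : ℝ) + 1) / 2)) *
          ((⨆ y : Fin d → ℝ, ‖η y‖) +
            ∑ j : Fin d, ⨆ m : Fin (d + 3), ⨆ y : Fin d → ℝ,
              ‖iteratedFDeriv ℝ (m : ℕ)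
                  (fun z => (Real.exp (-(z j ^ 2)) : ℂ) * η z) y
                  (fun _ => Pi.single j 1)‖) := by
  classical
  -- η is not identically zero
  have h0mem : (0 : Fin d → ℝ) ∈ tsupport η := mem_of_mem_nhds hnbhd
  have hηne : ∃ y, η y ≠ 0 := by
    by_contra h
    push_neg at h
    have hsupp : tsupport η = ∅ := by
      rw [tsupport, Function.support_eq_empty_iff.2 (funext h), closure_empty]
    rw [hsupp] at h0mem
    exact h0mem
  obtain ⟨y₀, hy₀⟩ := hηne
  have hbdd : BddAbove (Set.range fun y : Fin d → ℝ => ‖η y‖) :=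
    hη.continuous.norm.bddAbove_range_of_hasCompactSupport hcpt.norm
  have hs₀pos : 0 < ⨆ y : Fin d → ℝ, ‖η y‖ :=
    lt_of_lt_of_le (norm_pos_iff.2 hy₀) (le_ciSup hbdd y₀)
  -- the function g on Euclidean space
  set L : EuclideanSpace ℝ (Fin d) ≃L[ℝ] (Fin d → ℝ) :=
    PiLp.continuousLinearEquiv 2 ℝ (fun _ : Fin d => ℝ) with hLdef
  set g : EuclideanSpace ℝ (Fin d) → ℂ := fun x => ((x k : ℝ) : ℂ) * η (L x) with hgdef
  have hg : ContDiff ℝ (⊤ : ℕ∞) g := by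
    have h1 : ContDiff ℝ (⊤ : ℕ∞) (fun x : EuclideanSpace ℝ (Fin d) => ((x k : ℝ) : ℂ)) :=
      (Complex.ofRealCLM.comp ((ContinuousLinearMap.proj k).comp
        (L : EuclideanSpace ℝ (Fin d) →L[ℝ] (Fin d → ℝ)))).contDiff
    exact h1.mul (hη.comp (L : EuclideanSpace ℝ (Fin d) →L[ℝ] (Fin d → ℝ)).contDiff)
  have hgc : HasCompactSupport g := by
    have h2 : HasCompactSupport (fun x : EuclideanSpace ℝ (Fin d) => η (L x)) :=
      hcpt.comp_homeomorph L.toHomeomorph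
    exact h2.mul_left
  have hg0 : g 0 = 0 := by
    have : ((0 : EuclideanSpace ℝ (Fin d)) k : ℝ) = 0 := rfl
    simp [hgdef, this]
  obtain ⟨A, hA0, hA⟩ := aux d ε hε g hg hgc hg0
  refine ⟨A / (⨆ y : Fin d → ℝ, ‖η y‖), fun t ht => ?_⟩
  have ht0 : (0:ℝ) < |t| := lt_of_lt_of_le one_pos ht
  have hT0 : (0:ℝ) < |t| ^ (((d : ℝ) + 1) / 2) := Real.rpow_pos_of_pos ht0 _
  -- transfer the integral to Euclidean space
  have htrans : (∫ y : Fin d → ℝ,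
        Complex.exp (Complex.I * (t : ℂ) * ((∑ j, ε j * y j ^ 2 : ℝ) : ℂ)) *
          (Real.exp (-(∑ j, y j ^ 2)) : ℂ) * ((y k : ℝ) : ℂ) * η y)
      = ∫ x : EuclideanSpace ℝ (Fin d),
          Complex.exp (∑ j, (Complex.I * t * ε j - 1) * (x j : ℂ) ^ 2) * g x := by
    rw [← (EuclideanSpace.volume_preserving_symm_measurableEquiv_toLp (Fin d)).integral_comp']
    apply integral_congr_ae (Filter.Eventually.of_forall fun x => ?_)
    have hx : ∀ j, ((MeasurableEquiv.toLp 2 (Fin d → ℝ)).symm x) j = x j := fun j => rfl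
    have hη' : η ((MeasurableEquiv.toLp 2 (Fin d → ℝ)).symm x) = η (L x) := rfl
    simp only [hx, hη']
    have hexp : Complex.exp (Complex.I * (t : ℂ) * ((∑ j, ε j * x j ^ 2 : ℝ) : ℂ)) *
        ((Real.exp (-(∑ j, x j ^ 2)) : ℝ) : ℂ)
        = Complex.exp (∑ j, (Complex.I * t * ε j - 1) * (x j : ℂ) ^ 2) := by
      rw [Complex.ofReal_exp, ← Complex.exp_add]
      congr 1
      push_cast
      rw [← sub_eq_add_neg, Finset.mul_sum, ← Finset.sum_sub_distrib]
      apply Finset.sum_congr rfl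
      intro j _
      ring
    rw [mul_assoc (Complex.exp (Complex.I * (t : ℂ) * ((∑ j, ε j * x j ^ 2 : ℝ) : ℂ)) *
      ((Real.exp (-(∑ j, x j ^ 2)) : ℝ) : ℂ)), hexp]
  rw [htrans]
  refine (hA t ht).trans ?_
  -- final juggling with the constant
  set s₀ := ⨆ y : Fin d → ℝ, ‖η y‖ with hs₀def
  set S₁ := ∑ j : Fin d, ⨆ m : Fin (d + 3), ⨆ y : Fin d → ℝ,
      ‖iteratedFDeriv ℝ (m : ℕ) (fun z => (Real.exp (-(z j ^ 2)) : ℂ) * η z) y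
        (fun _ => Pi.single j 1)‖ with hS₁def
  have hS₁ : 0 ≤ S₁ := by
    apply Finset.sum_nonneg
    intro j _
    exact Real.iSup_nonneg fun m => Real.iSup_nonneg fun y => norm_nonneg _
  have hfact : (A / s₀ / |t| ^ (((d : ℝ) + 1) / 2)) * s₀ = A / |t| ^ (((d : ℝ) + 1) / 2) := by
    field_simp
  calc A / |t| ^ (((d : ℝ) + 1) / 2)
      = (A / s₀ / |t| ^ (((d : ℝ) + 1) / 2)) * s₀ := hfact.symm
    _ ≤ (A / s₀ / |t| ^ (((d : ℝ) + 1) / 2)) * (s₀ + S₁) := by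
        apply mul_le_mul_of_nonneg_left (le_add_of_nonneg_right hS₁) (by positivity)
end
end

section
/- (Uniform dispersive estimate, d = 1) Let ω > 0, λ > 0, γ(k) = sqrt(ω² + 4λ sin²(k/2)), and φ_{t,x}(k) = kx − 2tγ(k). For every η ∈ C¹(𝕋¹) there is a constant C, independent of t and x ∈ ℤ, such that |∫_{𝕋¹} e^{iφ_{t,x}(k)} η(k) dk| ≤ C |t|^{−1/3} ( ‖η'‖_{L¹} + ‖η‖_{L¹} ) whenever |t| ≥ 1. -/
/-!
On a short interval where `|γ''| ≥ c` or `|γ'''| ≥ c`, the phase `φ(k) = k x - 2 t γ(k)` has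
`|φ''| ≥ 2 c |t|` or `|φ'''| ≥ 2 c |t|`, so van der Corput's lemma bounds `∫ e^{iφ}` by
`O(|t|^{-1/2})` or `O(|t|^{-1/3})`, uniformly in `x`. The test for `|φ^{(k)}| ≥ λ` follows from
the one of order `k - 1`: `|φ^{(k-1)}|` grows at rate `λ` away from its minimum point, so only an
interval of length `2ρ/λ` around it misses the bound `|φ^{(k-1)}| ≥ ρ`, and that interval is
estimated trivially.

Since `γ''` and `γ'''` have no common zero, compactness cuts `[-π, π]` into boundedly many such
intervals, giving `|∫_{-π}^u e^{iφ}| ≤ M |t|^{-1/3}` for all `u`. An integration by parts against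
`η` then gives the bound `M |t|^{-1/3} (‖η‖_∞ + ‖η'‖_{L¹})`, and
`‖η‖_∞ ≤ ‖η‖_{L¹} / 2π + ‖η'‖_{L¹}`.

At a common zero of `γ''` and `γ'''`, differentiating `γ² = ω² + 2λ - 2λ cos k` gives
`γ γ''' + 3 γ' γ'' = -λ sin k`, so `sin k = 0`; then `γ γ' = λ sin k` gives `γ' = 0`, and
`γ'² + γ γ'' = λ cos k` gives `cos k = 0`, which is impossible.
-/

open MeasureTheory Real Set

noncomputable def oscIntegral (φ : ℝ → ℝ) (a b : ℝ) : ℂ :=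
  ∫ k in a..b, Complex.exp (Complex.I * φ k)

theorem Continuous.cexp_I_mul {φ : ℝ → ℝ} (hφ : Continuous φ) :
    Continuous fun k => Complex.exp (Complex.I * φ k) := by
  fun_prop

theorem norm_oscIntegral_le (φ : ℝ → ℝ) {a b : ℝ} (hab : a ≤ b) : ‖oscIntegral φ a b‖ ≤ b - a := by
  simpa [oscIntegral, abs_of_nonneg (sub_nonneg.2 hab)] using
    intervalIntegral.norm_integral_le_of_norm_le_const (a := a) (b := b) (C := 1)
      fun k _ => (Complex.norm_exp_I_mul_ofReal (φ k)).le

theorem oscIntegral_add_adjacent_intervals {φ : ℝ → ℝ} (hφ : Continuous φ) (a b c : ℝ) :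
    oscIntegral φ a b + oscIntegral φ b c = oscIntegral φ a c :=
  intervalIntegral.integral_add_adjacent_intervals (hφ.cexp_I_mul.intervalIntegrable a b)
    (hφ.cexp_I_mul.intervalIntegrable b c)

theorem IsPreconnected.forall_pos_or_forall_neg {s : Set ℝ} (hs : IsPreconnected s) {ψ : ℝ → ℝ}
    (hψ : ContinuousOn ψ s) (hψ0 : ∀ k ∈ s, ψ k ≠ 0) :
    (∀ k ∈ s, 0 < ψ k) ∨ (∀ k ∈ s, ψ k < 0) := by
  by_contra! ⟨⟨k₁, hk₁, h₁⟩, ⟨k₂, hk₂, h₂⟩⟩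
  obtain ⟨k, hk, hk0⟩ := hs.intermediate_value hk₁ hk₂ hψ ⟨h₁, h₂⟩
  exact hψ0 k hk hk0

theorem integral_abs_deriv_div_sq_le {ψ ψ' : ℝ → ℝ} {a b lb : ℝ}
    (hψ : ∀ k, HasDerivAt ψ (ψ' k) k) (hψ' : Continuous ψ') (hab : a ≤ b) (hlb : 0 < lb)
    (hlow : ∀ k ∈ Icc a b, lb ≤ |ψ k|)
    (hsign : (∀ k ∈ Icc a b, 0 ≤ ψ' k) ∨ (∀ k ∈ Icc a b, ψ' k ≤ 0)) :
    ∫ k in a..b, |ψ' k| / ψ k ^ 2 ≤ 2 / lb := by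
  have hψ0 : ∀ k ∈ uIcc a b, ψ k ≠ 0 := fun k hk =>
    abs_pos.1 (hlb.trans_le (hlow k (uIcc_of_le hab ▸ hk)))
  have hψc : Continuous ψ := Differentiable.continuous fun k => (hψ k).differentiableAt
  have hftc : ∫ k in a..b, ψ' k / ψ k ^ 2 = (ψ a)⁻¹ - (ψ b)⁻¹ := by
    rw [intervalIntegral.integral_eq_sub_of_hasDerivAt (f := fun k => -(ψ k)⁻¹)
      (fun k hk => ((hψ k).inv (hψ0 k hk)).neg.congr_deriv (by ring))]
    · ring
    · exact ContinuousOn.intervalIntegrable (hψ'.continuousOn.div (hψc.pow 2).continuousOn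
        fun k hk => pow_ne_zero 2 (hψ0 k hk))
  have hend : ∀ k ∈ Icc a b, |(ψ k)⁻¹| ≤ lb⁻¹ := fun k hk => by
    rw [abs_inv]; exact inv_anti₀ hlb (hlow k hk)
  have ha := abs_le.1 (hend a ⟨le_rfl, hab⟩)
  have hb := abs_le.1 (hend b ⟨hab, le_rfl⟩)
  rw [div_eq_mul_inv]
  rcases hsign with hpos | hneg
  · have : ∫ k in a..b, |ψ' k| / ψ k ^ 2 = ∫ k in a..b, ψ' k / ψ k ^ 2 :=
      intervalIntegral.integral_congr fun k hk => by
        simp only [abs_of_nonneg (hpos k (uIcc_of_le hab ▸ hk))]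
    linarith
  · have : ∫ k in a..b, |ψ' k| / ψ k ^ 2 = -∫ k in a..b, ψ' k / ψ k ^ 2 := by
      rw [← intervalIntegral.integral_neg]
      exact intervalIntegral.integral_congr fun k hk => by
        simp only [abs_of_nonpos (hneg k (uIcc_of_le hab ▸ hk)), neg_div]
    linarith

theorem norm_oscIntegral_le_of_le_abs_deriv {φ φ' φ'' : ℝ → ℝ} {a b lb : ℝ}
    (hφ : ∀ k, HasDerivAt φ (φ' k) k) (hφ' : ∀ k, HasDerivAt φ' (φ'' k) k)
    (hφ'' : Continuous φ'') (hab : a ≤ b) (hlb : 0 < lb) (hlow : ∀ k ∈ Icc a b, lb ≤ |φ' k|)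
    (hsign : (∀ k ∈ Icc a b, 0 ≤ φ'' k) ∨ (∀ k ∈ Icc a b, φ'' k ≤ 0)) :
    ‖oscIntegral φ a b‖ ≤ 4 / lb := by
  have hφ'c : Continuous φ' := Differentiable.continuous fun k => (hφ' k).differentiableAt
  have hφ'0 : ∀ k ∈ uIcc a b, φ' k ≠ 0 := fun k hk =>
    abs_pos.1 (hlb.trans_le (hlow k (uIcc_of_le hab ▸ hk)))
  set e : ℝ → ℂ := fun k => Complex.exp (Complex.I * φ k)
  set u : ℝ → ℂ := fun k => ((φ' k)⁻¹ : ℝ)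
  set u' : ℝ → ℂ := fun k => ((-φ'' k / φ' k ^ 2 : ℝ) : ℂ)
  have he : ∀ k, HasDerivAt e (Complex.I * φ' k * e k) k := fun k => by
    simpa [e, mul_comm] using (((hφ k).ofReal_comp).const_mul Complex.I).cexp
  have hu : ∀ k ∈ uIcc a b, HasDerivAt u (u' k) k := fun k hk =>
    ((hφ' k).inv (hφ'0 k hk)).ofReal_comp
  have hec : Continuous e := Differentiable.continuous fun k => (he k).differentiableAt
  -- `e = -I * u * e'`, so one integration by parts trades `e` for `u' * e`.
  have hibp := intervalIntegral.integral_mul_deriv_eq_deriv_mul hu (fun k _ => he k)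
    (ContinuousOn.intervalIntegrable (Complex.continuous_ofReal.comp_continuousOn
      (hφ''.neg.continuousOn.div (hφ'c.pow 2).continuousOn fun k hk => pow_ne_zero 2 (hφ'0 k hk))))
    ((by fun_prop : Continuous fun k => Complex.I * φ' k * e k).intervalIntegrable a b)
  have hosc : oscIntegral φ a b = -Complex.I * ∫ k in a..b, u k * (Complex.I * φ' k * e k) := by
    rw [← intervalIntegral.integral_const_mul]
    refine intervalIntegral.integral_congr fun k hk => ?_
    have : (φ' k : ℂ) ≠ 0 := Complex.ofReal_ne_zero.2 (hφ'0 k hk)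
    simp only [u, Complex.ofReal_inv]
    field_simp
    simp [e]
  have hend : ∀ k ∈ Icc a b, ‖u k * e k‖ ≤ lb⁻¹ := fun k hk => by
    simpa [u, e, Complex.norm_exp_I_mul_ofReal] using inv_anti₀ hlb (hlow k hk)
  have hrem : ‖∫ k in a..b, u' k * e k‖ ≤ 2 / lb := by
    refine (intervalIntegral.norm_integral_le_integral_norm hab).trans (le_of_eq_of_le ?_
      (integral_abs_deriv_div_sq_le hφ' hφ'' hab hlb hlow hsign))
    refine intervalIntegral.integral_congr fun k _ => ?_
    simp [u', e, Complex.norm_exp_I_mul_ofReal]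
  rw [hosc, hibp, norm_mul, norm_neg, Complex.norm_I, one_mul]
  have := norm_sub_le (u b * e b) (u a * e a)
  have := norm_sub_le (u b * e b - u a * e a) (∫ k in a..b, u' k * e k)
  linarith [hend a ⟨le_rfl, hab⟩, hend b ⟨hab, le_rfl⟩, div_eq_mul_inv 4 lb, div_eq_mul_inv 2 lb]

theorem abs_sub_le_abs_of_isMinOn {ψ : ℝ → ℝ} {a b m k : ℝ} (hψ : ContinuousOn ψ (Icc a b))
    (hm : m ∈ Icc a b) (hmin : IsMinOn (fun k => |ψ k|) (Icc a b) m) (hk : k ∈ Icc a b) :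
    |ψ k - ψ m| ≤ |ψ k| := by
  have hmk : |ψ m| ≤ |ψ k| := hmin hk
  rcases le_or_gt 0 (ψ k * ψ m) with hsame | hopp
  · have : ψ m ^ 2 ≤ ψ k * ψ m := by
      calc ψ m ^ 2 = |ψ m| * |ψ m| := by rw [abs_mul_abs_self, sq]
        _ ≤ |ψ k| * |ψ m| := by gcongr
        _ = ψ k * ψ m := by rw [← abs_mul, abs_of_nonneg hsame]
    rw [← sq_le_sq]
    nlinarith
  · -- a sign change of `ψ` between `k` and `m` would give a zero of `ψ`, below `|ψ m|`
    have h0 : (0 : ℝ) ∈ uIcc (ψ k) (ψ m) := by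
      rcases mul_neg_iff.1 hopp with ⟨h₁, h₂⟩ | ⟨h₁, h₂⟩
      · exact mem_uIcc.2 (Or.inr ⟨h₂.le, h₁.le⟩)
      · exact mem_uIcc.2 (Or.inl ⟨h₁.le, h₂.le⟩)
    obtain ⟨z, hz, hz0⟩ := intermediate_value_uIcc (hψ.mono (uIcc_subset_Icc hk hm)) h0
    have := hmin (uIcc_subset_Icc hk hm hz)
    simp only [mem_ofPred_eq, hz0, abs_zero, abs_nonpos_iff] at this
    simp [this] at hopp

theorem mul_abs_sub_le_abs_sub {ψ ψ' : ℝ → ℝ} {a b lb x y : ℝ}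
    (hψ : ∀ k, HasDerivAt ψ (ψ' k) k) (hlow : ∀ k ∈ Icc a b, lb ≤ |ψ' k|)
    (hx : x ∈ Icc a b) (hy : y ∈ Icc a b) : lb * |x - y| ≤ |ψ x - ψ y| := by
  wlog hyx : y ≤ x generalizing x y
  · rw [abs_sub_comm x, abs_sub_comm (ψ x)]
    exact this hy hx (le_of_not_ge hyx)
  rcases hyx.eq_or_lt with rfl | hlt
  · simp
  obtain ⟨ξ, hξ, hslope⟩ := exists_hasDerivAt_eq_slope ψ ψ' hlt
    (Differentiable.continuous fun k => (hψ k).differentiableAt).continuousOn fun k _ => hψ k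
  rw [eq_div_iff (sub_ne_zero.2 hlt.ne')] at hslope
  rw [← hslope, abs_mul]
  exact mul_le_mul_of_nonneg_right (hlow ξ ⟨hy.1.trans hξ.1.le, hξ.2.le.trans hx.2⟩) (abs_nonneg _)

theorem norm_oscIntegral_le_add_of_le_abs_deriv {φ ψ ψ' : ℝ → ℝ} {a b lb ρ M : ℝ}
    (hφ : Continuous φ)
    (hψ : ∀ k, HasDerivAt ψ (ψ' k) k) (hab : a ≤ b) (hlb : 0 < lb) (hρ : 0 ≤ ρ) (hM : 0 ≤ M)
    (hlow : ∀ k ∈ Icc a b, lb ≤ |ψ' k|)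
    (hpiece : ∀ u v, a ≤ u → u < v → v ≤ b → (∀ k ∈ Icc u v, ρ ≤ |ψ k|) →
      ‖oscIntegral φ u v‖ ≤ M) :
    ‖oscIntegral φ a b‖ ≤ 2 * M + 2 * ρ / lb := by
  have hψc : Continuous ψ := Differentiable.continuous fun k => (hψ k).differentiableAt
  obtain ⟨m, hm, hmin⟩ :=
    isCompact_Icc.exists_isMinOn (nonempty_Icc.2 hab) hψc.abs.continuousOn
  set δ := ρ / lb
  have hδ : 0 ≤ δ := div_nonneg hρ hlb.le
  -- `|ψ| ≥ ρ` at distance `≥ δ` from `m`, so only `[m - δ, m + δ]` has to be estimated trivially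
  have hpiece' : ∀ u v, a ≤ u → u ≤ v → v ≤ b → (u < v → ∀ k ∈ Icc u v, δ ≤ |k - m|) →
      ‖oscIntegral φ u v‖ ≤ M := by
    intro u v hau huv hvb hfar
    rcases huv.eq_or_lt with rfl | huv
    · simpa [oscIntegral] using hM
    refine hpiece u v hau huv hvb fun k hk => ?_
    have hk' : k ∈ Icc a b := ⟨hau.trans hk.1, hk.2.trans hvb⟩
    exact ((div_le_iff₀' hlb).1 (hfar huv k hk)).trans <|
      (mul_abs_sub_le_abs_sub hψ hlow hk' hm).trans
        (abs_sub_le_abs_of_isMinOn hψc.continuousOn hm hmin hk')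
  set c := max a (m - δ)
  set d := min b (m + δ)
  have hcm : c ≤ m := max_le hm.1 (by linarith)
  have hmd : m ≤ d := le_min hm.2 (by linarith)
  have hleft : ‖oscIntegral φ a c‖ ≤ M := by
    refine hpiece' a c le_rfl (le_max_left _ _) (hcm.trans (hmd.trans (min_le_left _ _)))
      fun hac k hk => ?_
    have : c = m - δ := max_eq_right (lt_max_iff.1 hac |>.resolve_left (lt_irrefl a)).le
    rw [abs_sub_comm]
    exact le_abs.2 (Or.inl (by linarith [hk.2]))
  have hright : ‖oscIntegral φ d b‖ ≤ M := by
    refine hpiece' d b ((le_max_left _ _).trans (hcm.trans hmd)) (min_le_left _ _) le_rfl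
      fun hdb k hk => ?_
    have : d = m + δ := min_eq_right (min_lt_iff.1 hdb |>.resolve_left (lt_irrefl b)).le
    exact le_abs.2 (Or.inl (by linarith [hk.1]))
  have hmid : ‖oscIntegral φ c d‖ ≤ 2 * ρ / lb := by
    refine (norm_oscIntegral_le φ (hcm.trans hmd)).trans ?_
    have : d - c ≤ (m + δ) - (m - δ) := sub_le_sub (min_le_right _ _) (le_max_right _ _)
    rw [mul_div_assoc]
    linarith
  rw [← oscIntegral_add_adjacent_intervals hφ a d b,
    ← oscIntegral_add_adjacent_intervals hφ a c d]
  calc _ ≤ ‖oscIntegral φ a c‖ + ‖oscIntegral φ c d‖ + ‖oscIntegral φ d b‖ :=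
        (norm_add_le _ _).trans (by gcongr; exact norm_add_le _ _)
    _ ≤ 2 * M + 2 * ρ / lb := by linarith

theorem norm_oscIntegral_le_of_sq_le_abs_deriv2 {φ φ' φ'' : ℝ → ℝ} {a b μ : ℝ}
    (hφ : ∀ k, HasDerivAt φ (φ' k) k) (hφ' : ∀ k, HasDerivAt φ' (φ'' k) k)
    (hφ'' : Continuous φ'') (hab : a ≤ b) (hμ : 0 < μ) (hlow : ∀ k ∈ Icc a b, μ ^ 2 ≤ |φ'' k|) :
    ‖oscIntegral φ a b‖ ≤ 10 / μ := by
  have hφc : Continuous φ := Differentiable.continuous fun k => (hφ k).differentiableAt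
  have hsign := isPreconnected_Icc.forall_pos_or_forall_neg hφ''.continuousOn
    fun k hk => abs_pos.1 ((pow_pos hμ 2).trans_le (hlow k hk))
  have h := norm_oscIntegral_le_add_of_le_abs_deriv (ρ := μ) (M := 4 / μ) hφc hφ' hab
    (pow_pos hμ 2) hμ.le (by positivity) hlow fun u v hau huv hvb hfar =>
      norm_oscIntegral_le_of_le_abs_deriv hφ hφ' hφ'' huv.le hμ hfar
        (hsign.imp (fun h k hk => (h k ⟨hau.trans hk.1, hk.2.trans hvb⟩).le)
          (fun h k hk => (h k ⟨hau.trans hk.1, hk.2.trans hvb⟩).le))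
  calc _ ≤ 2 * (4 / μ) + 2 * μ / μ ^ 2 := h
    _ = 10 / μ := by field_simp; ring

theorem norm_oscIntegral_le_of_pow_three_le_abs_deriv3 {φ φ' φ'' φ''' : ℝ → ℝ} {a b μ : ℝ}
    (hφ : ∀ k, HasDerivAt φ (φ' k) k) (hφ' : ∀ k, HasDerivAt φ' (φ'' k) k)
    (hφ'' : ∀ k, HasDerivAt φ'' (φ''' k) k) (hab : a ≤ b) (hμ : 0 < μ)
    (hlow : ∀ k ∈ Icc a b, μ ^ 3 ≤ |φ''' k|) :
    ‖oscIntegral φ a b‖ ≤ 22 / μ := by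
  have hφc : Continuous φ := Differentiable.continuous fun k => (hφ k).differentiableAt
  have hφ''c : Continuous φ'' := Differentiable.continuous fun k => (hφ'' k).differentiableAt
  have h := norm_oscIntegral_le_add_of_le_abs_deriv (ρ := μ ^ 2) (M := 10 / μ) hφc hφ'' hab
    (pow_pos hμ 3) (by positivity) (by positivity) hlow fun u v _ huv _ hfar =>
      norm_oscIntegral_le_of_sq_le_abs_deriv2 hφ hφ' hφ''c huv.le hμ hfar
  calc _ ≤ 2 * (10 / μ) + 2 * μ ^ 2 / μ ^ 3 := h
    _ = 22 / μ := by field_simp; ring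

theorem norm_integral_mul_le_of_forall_norm_integral_le {e η : ℝ → ℂ} {a b M : ℝ}
    (he : Continuous e) (hη : ContDiff ℝ 1 η) (hab : a ≤ b)
    (hM : ∀ u ∈ Icc a b, ‖∫ k in a..u, e k‖ ≤ M) :
    ‖∫ k in a..b, e k * η k‖ ≤ M * (‖η b‖ + ∫ k in a..b, ‖deriv η k‖) := by
  have hη' : Continuous (deriv η) := hη.continuous_deriv le_rfl
  set F : ℝ → ℂ := fun u => ∫ k in a..u, e k
  have hF : ∀ u, HasDerivAt F (e u) u := fun u =>
    intervalIntegral.integral_hasDerivAt_right (he.intervalIntegrable a u)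
      he.aestronglyMeasurable.stronglyMeasurableAtFilter he.continuousAt
  -- Abel summation: integrate `e` and differentiate `η`
  have hibp := intervalIntegral.integral_mul_deriv_eq_deriv_mul
    (fun k _ => (hη.differentiable one_ne_zero k).hasDerivAt) (fun k _ => hF k)
    (hη'.intervalIntegrable a b) (he.intervalIntegrable a b)
  have hrem : ‖∫ k in a..b, deriv η k * F k‖ ≤ (∫ k in a..b, ‖deriv η k‖) * M := by
    rw [← intervalIntegral.integral_mul_const]
    refine intervalIntegral.norm_integral_le_of_norm_le hab
      (Filter.Eventually.of_forall fun k hk => ?_)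
      ((hη'.norm.mul continuous_const).intervalIntegrable a b)
    rw [norm_mul]
    exact mul_le_mul_of_nonneg_left (hM k (Ioc_subset_Icc_self hk)) (norm_nonneg _)
  simp_rw [mul_comm (e _)]
  rw [hibp, show F a = 0 from intervalIntegral.integral_same, mul_zero, sub_zero]
  calc _ ≤ ‖η b‖ * ‖F b‖ + ‖∫ k in a..b, deriv η k * F k‖ := by
        rw [← norm_mul]; exact norm_sub_le _ _
    _ ≤ ‖η b‖ * M + (∫ k in a..b, ‖deriv η k‖) * M := by
        gcongr
        exact hM b ⟨hab, le_rfl⟩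
    _ = _ := by ring

theorem norm_le_integral_norm_div_add_integral_norm_deriv {E : Type*} [NormedAddCommGroup E]
    [NormedSpace ℝ E] [CompleteSpace E] {η : ℝ → E} (hη : ContDiff ℝ 1 η) {a b k : ℝ}
    (hab : a < b) (hk : k ∈ Icc a b) :
    ‖η k‖ ≤ (∫ s in a..b, ‖η s‖) / (b - a) + ∫ s in a..b, ‖deriv η s‖ := by
  have hη' : Continuous (deriv η) := hη.continuous_deriv le_rfl
  obtain ⟨s₀, hs₀, hmin⟩ := isCompact_Icc.exists_isMinOn (nonempty_Icc.2 hab.le)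
    hη.continuous.norm.continuousOn
  have hs₀_le : ‖η s₀‖ ≤ (∫ s in a..b, ‖η s‖) / (b - a) := by
    rw [le_div_iff₀ (sub_pos.2 hab), mul_comm, ← smul_eq_mul, ← intervalIntegral.integral_const]
    exact intervalIntegral.integral_mono_on hab.le intervalIntegrable_const
      (hη.continuous.norm.intervalIntegrable a b) fun s hs => hmin hs
  have hvar : ‖η k - η s₀‖ ≤ ∫ s in a..b, ‖deriv η s‖ := by
    rw [← intervalIntegral.integral_deriv_eq_sub (fun s _ => hη.differentiable one_ne_zero s)
      (hη'.intervalIntegrable _ _)]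
    refine intervalIntegral.norm_integral_le_abs_integral_norm.trans ?_
    refine (intervalIntegral.abs_integral_mono_interval (uIoc_subset_uIoc_of_uIcc_subset_uIcc
      (uIcc_subset_uIcc (uIcc_of_le hab.le ▸ hs₀) (uIcc_of_le hab.le ▸ hk)))
      (Filter.Eventually.of_forall fun s => norm_nonneg _)
      (hη'.norm.intervalIntegrable a b)).trans ?_
    rw [abs_of_nonneg (intervalIntegral.integral_nonneg hab.le fun s _ => norm_nonneg _)]
  calc ‖η k‖ ≤ ‖η s₀‖ + ‖η k - η s₀‖ := norm_le_insert' _ _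
    _ ≤ _ := add_le_add hs₀_le hvar

theorem norm_integral_le_nat_mul_of_short_subintervals {E : Type*} [NormedAddCommGroup E]
    [NormedSpace ℝ E] {f : ℝ → E} (hf : Continuous f) {a b ℓ M : ℝ} {N : ℕ} (hab : a ≤ b)
    (hN : b - a ≤ N * ℓ)
    (hM : ∀ v w, a ≤ v → v ≤ w → w ≤ b → w - v ≤ ℓ → ‖∫ k in v..w, f k‖ ≤ M) :
    ‖∫ k in a..b, f k‖ ≤ N * M := by
  rcases N.eq_zero_or_pos with rfl | hN0
  · simp [le_antisymm (by simpa using hN) hab]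
  have hN0' : (0 : ℝ) < N := Nat.cast_pos.2 hN0
  set p : ℕ → ℝ := fun j => a + j * ((b - a) / N)
  have hstep : 0 ≤ (b - a) / N := div_nonneg (sub_nonneg.2 hab) hN0'.le
  have hpN : p N = b := by simp only [p]; field_simp; ring
  rw [← hpN, show a = p 0 by simp [p], ← intervalIntegral.sum_integral_adjacent_intervals
    fun j _ => hf.intervalIntegrable _ _]
  refine (norm_sum_le _ _).trans ?_
  rw [show (N : ℝ) * M = ∑ _j ∈ Finset.range N, M by simp]
  refine Finset.sum_le_sum fun j hj => hM _ _ ?_ ?_ ?_ ?_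
  · simp only [p, le_add_iff_nonneg_right]; positivity
  · simp only [p]; push_cast; linarith
  · have : ((j + 1 : ℕ) : ℝ) ≤ N := Nat.cast_le.2 (Finset.mem_range.1 hj)
    calc p (j + 1) ≤ a + N * ((b - a) / N) := by simp only [p]; gcongr
      _ = b := by field_simp; ring
  · simp only [p]; push_cast
    rw [add_sub_add_left_eq_sub, ← sub_mul, add_sub_cancel_left, one_mul, div_le_iff₀ hN0']
    linarith

theorem exists_forall_ball_le_abs_or {X : Type*} [PseudoMetricSpace X] {f g : X → ℝ}
    (hf : Continuous f) (hg : Continuous g) {K : Set X} (hK : IsCompact K)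
    (hfg : ∀ x ∈ K, f x ≠ 0 ∨ g x ≠ 0) :
    ∃ c > 0, ∃ δ > 0, ∀ x ∈ K,
      (∀ y ∈ Metric.ball x δ, c ≤ |f y|) ∨ (∀ y ∈ Metric.ball x δ, c ≤ |g y|) := by
  obtain ⟨m, hm, hmK⟩ := hK.exists_forall_le' (hf.abs.add hg.abs).continuousOn
    fun x hx => (hfg x hx).elim (fun h => add_pos_of_pos_of_nonneg (abs_pos.2 h) (abs_nonneg _))
      fun h => add_pos_of_nonneg_of_pos (abs_nonneg _) (abs_pos.2 h)
  set U : Bool → Set X := fun i => {y | m / 3 < |(bif i then f else g) y|}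
  have hU : ∀ i, IsOpen (U i) := fun i => by
    cases i
    · exact isOpen_lt continuous_const hg.abs
    · exact isOpen_lt continuous_const hf.abs
  have hKU : K ⊆ ⋃ i, U i := fun x hx => by
    have : m ≤ |f x| + |g x| := hmK x hx
    by_cases h : m / 3 < |f x|
    · exact mem_iUnion.2 ⟨true, h⟩
    · exact mem_iUnion.2 ⟨false, show m / 3 < |g x| by linarith⟩
  obtain ⟨δ, hδ, hball⟩ := lebesgue_number_lemma_of_metric hK hU hKU
  refine ⟨m / 3, by positivity, δ, hδ, fun x hx => ?_⟩
  obtain ⟨i, hi⟩ := hball x hx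
  cases i
  · exact Or.inr fun y hy => (hi hy).le
  · exact Or.inl fun y hy => (hi hy).le

theorem ContDiff.hasDerivAt_iteratedDeriv {f : ℝ → ℝ} {n : ℕ} (hf : ContDiff ℝ n f) {m : ℕ}
    (hm : m < n) (k : ℝ) : HasDerivAt (iteratedDeriv m f) (iteratedDeriv (m + 1) f k) k := by
  rw [iteratedDeriv_succ]
  exact (hf.differentiable_iteratedDeriv m (by exact_mod_cast hm) k).hasDerivAt

def phase (γ : ℝ → ℝ) (t x k : ℝ) : ℝ := k * x - 2 * t * γ k

theorem Continuous.phase {γ : ℝ → ℝ} (hγ : Continuous γ) (t x : ℝ) : Continuous (phase γ t x) := by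
  unfold _root_.phase; fun_prop

theorem norm_oscIntegral_phase_le {γ : ℝ → ℝ} (hγ : ContDiff ℝ 3 γ) {a b c t : ℝ} (x : ℝ)
    (hab : a ≤ b) (hc : 0 < c) (ht : 1 ≤ |t|)
    (hlow : (∀ k ∈ Icc a b, c ≤ |iteratedDeriv 2 γ k|) ∨
      (∀ k ∈ Icc a b, c ≤ |iteratedDeriv 3 γ k|)) :
    ‖oscIntegral (phase γ t x) a b‖ ≤ 22 / (min 1 (2 * c) * |t| ^ (1 / 3 : ℝ)) := by
  have hd : ∀ m < 3, ∀ k, HasDerivAt (iteratedDeriv m γ) (iteratedDeriv (m + 1) γ k) k :=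
    fun m hm => hγ.hasDerivAt_iteratedDeriv (by exact_mod_cast hm)
  have hφ : ∀ k, HasDerivAt (phase γ t x) (x - 2 * t * iteratedDeriv 1 γ k) k := fun k => by
    have := (hd 0 (by norm_num) k).const_mul (2 * t)
    simp only [iteratedDeriv_zero] at this
    exact ((hasDerivAt_mul_const x).sub this).congr_deriv (by ring)
  have hφ' : ∀ k, HasDerivAt (fun k => x - 2 * t * iteratedDeriv 1 γ k)
      (-(2 * t * iteratedDeriv 2 γ k)) k := fun k =>
    ((hd 1 (by norm_num) k).const_mul (2 * t)).const_sub x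
  have hφ'' : ∀ k, HasDerivAt (fun k => -(2 * t * iteratedDeriv 2 γ k))
      (-(2 * t * iteratedDeriv 3 γ k)) k := fun k =>
    ((hd 2 (by norm_num) k).const_mul (2 * t)).neg
  set s := min 1 (2 * c)
  set T := |t| ^ (1 / 3 : ℝ)
  have hs : 0 < s := lt_min one_pos (by positivity)
  have hT : 1 ≤ T := Real.one_le_rpow ht (by norm_num)
  have hT3 : T ^ 3 = |t| := by
    rw [← Real.rpow_natCast, ← Real.rpow_mul (abs_nonneg t)]; norm_num
  have hsT : ∀ n, 1 ≤ n → n ≤ 3 → (s * T) ^ n ≤ 2 * c * |t| := fun n hn1 hn3 => by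
    calc (s * T) ^ n = s ^ n * T ^ n := mul_pow s T n
      _ ≤ s * T ^ 3 := by
        gcongr
        exact pow_le_of_le_one hs.le (min_le_left _ _) (by omega)
      _ ≤ 2 * c * |t| := by rw [hT3]; gcongr; exact min_le_right _ _
  have hlow_of : ∀ m k, c ≤ |iteratedDeriv m γ k| → ∀ n, 1 ≤ n → n ≤ 3 →
      (s * T) ^ n ≤ |-(2 * t * iteratedDeriv m γ k)| := fun m k hk n hn1 hn3 => by
    rw [abs_neg, abs_mul, abs_mul, abs_two]
    nlinarith [hsT n hn1 hn3, abs_nonneg t]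
  have hμ : 0 < s * T := mul_pos hs (by linarith)
  rcases hlow with h2 | h3
  · refine (norm_oscIntegral_le_of_sq_le_abs_deriv2 hφ hφ'
      (continuous_const.mul (hγ.continuous_iteratedDeriv 2 (by norm_num))).neg hab hμ
      fun k hk => hlow_of 2 k (h2 k hk) 2 (by norm_num) (by norm_num)).trans ?_
    gcongr; norm_num
  · exact norm_oscIntegral_le_of_pow_three_le_abs_deriv3 hφ hφ' hφ'' hab hμ
      fun k hk => hlow_of 3 k (h3 k hk) 3 (by norm_num) (by norm_num)

theorem exists_forall_norm_oscIntegral_phase_le {γ : ℝ → ℝ} (hγ : ContDiff ℝ 3 γ) {a b : ℝ}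
    (h23 : ∀ k ∈ Icc a b, iteratedDeriv 2 γ k ≠ 0 ∨ iteratedDeriv 3 γ k ≠ 0) :
    ∃ M, ∀ t x, 1 ≤ |t| → ∀ u ∈ Icc a b,
      ‖oscIntegral (phase γ t x) a u‖ ≤ M / |t| ^ (1 / 3 : ℝ) := by
  obtain ⟨c, hc, δ, hδ, hloc⟩ := exists_forall_ball_le_abs_or
    (hγ.continuous_iteratedDeriv 2 (by norm_num)) (hγ.continuous_iteratedDeriv 3 le_rfl)
    isCompact_Icc h23
  obtain ⟨N, hN⟩ := exists_nat_gt ((b - a) / (δ / 2))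
  refine ⟨N * (22 / min 1 (2 * c)), fun t x ht u hu => ?_⟩
  rw [mul_div_assoc, div_div]
  refine norm_integral_le_nat_mul_of_short_subintervals (hγ.continuous.phase t x).cexp_I_mul
    hu.1 (ℓ := δ / 2)
    (by rw [div_lt_iff₀ (by positivity)] at hN; linarith [hu.2])
    fun v w hav hvw hwu hwv => norm_oscIntegral_phase_le hγ x hvw hc ht ?_
  have hball : Icc v w ⊆ Metric.ball v δ := fun k hk => by
    rw [Metric.mem_ball, Real.dist_eq, abs_lt]
    constructor <;> linarith [hk.1, hk.2]
  exact (hloc v ⟨hav, hu.2.trans' (hvw.trans hwu)⟩).imp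
    (fun h k hk => h k (hball hk)) (fun h k hk => h k (hball hk))

theorem exists_norm_integral_exp_phase_mul_le {γ : ℝ → ℝ} (hγ : ContDiff ℝ 3 γ) {a b : ℝ}
    (hab : a < b) (h23 : ∀ k ∈ Icc a b, iteratedDeriv 2 γ k ≠ 0 ∨ iteratedDeriv 3 γ k ≠ 0) :
    ∃ C, ∀ η : ℝ → ℂ, ContDiff ℝ 1 η → ∀ t x, 1 ≤ |t| →
      ‖∫ k in a..b, Complex.exp (Complex.I * phase γ t x k) * η k‖ ≤
        C / |t| ^ (1 / 3 : ℝ) * ((∫ k in a..b, ‖deriv η k‖) + ∫ k in a..b, ‖η k‖) := by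
  obtain ⟨M, hM⟩ := exists_forall_norm_oscIntegral_phase_le hγ h23
  refine ⟨M * (2 + (b - a)⁻¹), fun η hη t x ht => ?_⟩
  set D := ∫ k in a..b, ‖deriv η k‖
  set A := ∫ k in a..b, ‖η k‖
  have hD : 0 ≤ D := intervalIntegral.integral_nonneg hab.le fun k _ => norm_nonneg _
  have hA : 0 ≤ A := intervalIntegral.integral_nonneg hab.le fun k _ => norm_nonneg _
  have hMt : 0 ≤ M / |t| ^ (1 / 3 : ℝ) :=
    (norm_nonneg _).trans (hM t x ht a ⟨le_rfl, hab.le⟩)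
  have hηb := norm_le_integral_norm_div_add_integral_norm_deriv hη hab ⟨hab.le, le_rfl⟩
  calc _ ≤ M / |t| ^ (1 / 3 : ℝ) * (‖η b‖ + D) :=
        norm_integral_mul_le_of_forall_norm_integral_le
          (hγ.continuous.phase t x).cexp_I_mul hη hab.le (hM t x ht)
    _ ≤ M / |t| ^ (1 / 3 : ℝ) * ((2 + (b - a)⁻¹) * (D + A)) := by
        gcongr
        have : A / (b - a) ≤ (b - a)⁻¹ * (D + A) := by
          rw [div_eq_inv_mul]; gcongr; linarith
        nlinarith [inv_nonneg.2 (sub_pos.2 hab).le]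
    _ = _ := by ring

theorem iteratedDeriv_two_ne_zero_or_three_ne_zero {γ : ℝ → ℝ} (hγ : ContDiff ℝ 3 γ)
    {c₀ lam : ℝ} (hlam : lam ≠ 0) (hsq : ∀ k, γ k ^ 2 = c₀ - 2 * lam * cos k)
    (hγ0 : ∀ k, γ k ≠ 0) (k : ℝ) : iteratedDeriv 2 γ k ≠ 0 ∨ iteratedDeriv 3 γ k ≠ 0 := by
  have d0 : ∀ k, HasDerivAt γ (deriv γ k) k := by
    simpa using hγ.hasDerivAt_iteratedDeriv (m := 0) (by norm_num)
  have d1 : ∀ k, HasDerivAt (deriv γ) (iteratedDeriv 2 γ k) k := by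
    simpa using hγ.hasDerivAt_iteratedDeriv (m := 1) (by norm_num)
  have d2 : ∀ k, HasDerivAt (iteratedDeriv 2 γ) (iteratedDeriv 3 γ k) k :=
    hγ.hasDerivAt_iteratedDeriv (by norm_num)
  -- differentiate the identity `γ² = c₀ - 2 λ cos` three times
  have e1 : ∀ k, γ k * deriv γ k = lam * sin k := fun k => by
    have := ((d0 k).pow 2).unique ((((hasDerivAt_cos k).const_mul (2 * lam)).const_sub
      c₀).congr_of_eventuallyEq (.of_forall fun y => by simp [hsq]))
    norm_num at this
    linarith
  have e2 : ∀ k, deriv γ k ^ 2 + γ k * iteratedDeriv 2 γ k = lam * cos k := fun k => by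
    have := ((d0 k).mul (d1 k)).unique (((hasDerivAt_sin k).const_mul lam).congr_of_eventuallyEq
      (.of_forall fun y => by simp only [Pi.mul_apply, e1]))
    linarith
  have e3 : ∀ k, 3 * deriv γ k * iteratedDeriv 2 γ k + γ k * iteratedDeriv 3 γ k =
      -(lam * sin k) := fun k => by
    have := (((d1 k).pow 2).add ((d0 k).mul (d2 k))).unique
      (((hasDerivAt_cos k).const_mul lam).congr_of_eventuallyEq
        (.of_forall fun y => by simp only [Pi.add_apply, Pi.mul_apply, Pi.pow_apply, e2]))
    norm_num at this
    linarith
  by_contra! ⟨h2, h3⟩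
  have hs : sin k = 0 := by
    simpa [h2, h3, hlam] using e3 k
  have h1 : deriv γ k = 0 := by
    simpa [hs, hγ0 k] using e1 k
  have hc : cos k = 0 := by
    simpa [h1, h2, hlam] using (e2 k).symm
  simpa [hs, hc] using sin_sq_add_cos_sq k

theorem uniform_dispersive_estimate_one_dim_general (ω lam : ℝ) (hω : 0 < ω) (hlam : 0 < lam)
    (γ : ℝ → ℝ)
    (hγ : ∀ k, γ k = Real.sqrt (ω ^ 2 + 4 * lam * Real.sin (k / 2) ^ 2))
    (η : ℝ → ℂ) (hη : ContDiff ℝ 1 η) :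
    ∃ C : ℝ, ∀ (t : ℝ) (x : ℤ), 1 ≤ |t| →
      ‖∫ k in Set.Ioc (-π) π,
          Complex.exp (Complex.I * ((k * (x : ℝ) - 2 * t * γ k : ℝ) : ℂ)) * η k‖ ≤
        (C / |t| ^ ((1 : ℝ) / 3)) *
          ((∫ k in Set.Ioc (-π) π, ‖deriv η k‖) + ∫ k in Set.Ioc (-π) π, ‖η k‖) := by
  have hq : ∀ k, 0 < ω ^ 2 + 4 * lam * sin (k / 2) ^ 2 := fun k => by positivity
  have hsmooth : ContDiff ℝ 3 γ := by
    rw [funext hγ]; exact ContDiff.sqrt (by fun_prop) fun k => (hq k).ne'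
  have h23 := iteratedDeriv_two_ne_zero_or_three_ne_zero hsmooth hlam.ne'
    (c₀ := ω ^ 2 + 2 * lam)
    (fun k => by rw [hγ k, sq_sqrt (hq k).le, sin_sq, cos_sq, show 2 * (k / 2) = k by ring]; ring)
    (fun k => by rw [hγ k]; exact (sqrt_pos.2 (hq k)).ne')
  obtain ⟨C, hC⟩ := exists_norm_integral_exp_phase_mul_le hsmooth (neg_lt_self pi_pos)
    fun k _ => h23 k
  refine ⟨C, fun t x ht => ?_⟩
  simp only [← intervalIntegral.integral_of_le (neg_le_self pi_pos.le)]
  exact hC η hη t x ht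

/-- Uniform dispersive estimate in one dimension: with
`γ(k) = sqrt(ω² + 4λ sin²(k/2))` and phase `φ_{t,x}(k) = kx − 2tγ(k)`, for every
`C¹`, `2π`-periodic amplitude `η` on the torus `(-π,π]` there is a constant `C`,
independent of `t` and `x ∈ ℤ`, such that
`|∫_{𝕋¹} e^{iφ_{t,x}} η| ≤ C |t|^{-1/3} (‖η'‖_{L¹} + ‖η‖_{L¹})` for `|t| ≥ 1`. -/
theorem uniform_dispersive_estimate_one_dim (ω lam : ℝ) (hω : 0 < ω) (hlam : 0 < lam)
    (γ : ℝ → ℝ)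
    (hγ : ∀ k, γ k = Real.sqrt (ω ^ 2 + 4 * lam * Real.sin (k / 2) ^ 2))
    (η : ℝ → ℂ) (hη : ContDiff ℝ 1 η)
    (hper : ∀ k : ℝ, η (k + 2 * π) = η k) :
    ∃ C : ℝ, ∀ (t : ℝ) (x : ℤ), 1 ≤ |t| →
      ‖∫ k in Set.Ioc (-π) π,
          Complex.exp (Complex.I * ((k * (x : ℝ) - 2 * t * γ k : ℝ) : ℂ)) * η k‖ ≤
        (C / |t| ^ ((1 : ℝ) / 3)) *
          ((∫ k in Set.Ioc (-π) π, ‖deriv η k‖) + ∫ k in Set.Ioc (-π) π, ‖η k‖) :=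
  uniform_dispersive_estimate_one_dim_general ω lam hω hlam γ hγ η hη
end
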